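/- arXiv:2510.07746 — 6 statements merged into one kernel-verified Lean document; each statement's English description precedes it below -/
import Mathlib

section
/- Fix integers n > k > 1, an n-point dataset X ⊂ ℝ^{n−1}, and a partition C_1 ⊔ ⋯ ⊔ C_k = [n] such that every cluster satisfies |C_m| > 1 and the average silhouette score S̄(X; C_1,…,C_k) is well defined. Then for every 0 < ε ≤ 1 there exists an n-point dataset X_ε ⊂ ℝ^{n−1} with S̄(X_ε; C_1,…,C_k) = ε · S̄(X; C_1,…,C_k), and yet for every perplexity ρ ∈ (1, n−1), TSNE_ρ(X) = TSNE_ρ(X_ε). -/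
open scoped BigOperators RealInnerProductSpace
noncomputable section

namespace TSNEPaper

variable {n k : ℕ} {E F : Type*}

/-- The set of nearest neighbors of point `i` (used for the `σ = 0` limit of the
conditional affinity). -/
def nearestSet [NormedAddCommGroup E] (X : Fin n → E) (i : Fin n) : Finset (Fin n) :=
  (Finset.univ.erase i).filter fun j => ∀ l ∈ Finset.univ.erase i, ‖X i - X j‖ ≤ ‖X i - X l‖

/-- Conditional t-SNE affinity `P_{j|i}(X; σ)`.  For `σ = 0` we take the limiting value
as `σ → 0⁺`, which puts equal mass on the nearest neighbors of `i`. -/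
def condAffinity [NormedAddCommGroup E] (X : Fin n → E) (σ : ℝ) (i j : Fin n) : ℝ :=
  if j = i then 0
  else if σ = 0 then (if j ∈ nearestSet X i then ((nearestSet X i).card : ℝ)⁻¹ else 0)
  else Real.exp (-‖X i - X j‖ ^ 2 / (2 * σ ^ 2)) /
      ∑ l ∈ Finset.univ.erase i, Real.exp (-‖X i - X l‖ ^ 2 / (2 * σ ^ 2))

/-- Base-2 Shannon entropy of a distribution on `Fin n`. -/
def entropy2 (p : Fin n → ℝ) : ℝ := -∑ j, p j * Real.logb 2 (p j)

/-- `σ` is a perplexity-`ρ`-calibrated bandwidth for point `i`: it is nonnegative and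
minimizes the gap between the entropy of `P_{·|i}(X;σ)` and `log₂ ρ`. -/
def IsCalibrated [NormedAddCommGroup E] (X : Fin n → E) (ρ : ℝ) (i : Fin n) (σ : ℝ) : Prop :=
  0 ≤ σ ∧ ∀ σ' : ℝ, 0 ≤ σ' →
    |entropy2 (condAffinity X σ i) - Real.logb 2 ρ| ≤
      |entropy2 (condAffinity X σ' i) - Real.logb 2 ρ|

/-- The calibrated bandwidth `σ_i^*` (well defined by uniqueness of the minimizer). -/
def sigmaStar [NormedAddCommGroup E] (X : Fin n → E) (ρ : ℝ) (i : Fin n) : ℝ :=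
  Classical.epsilon (IsCalibrated X ρ i)

/-- Symmetrized input affinity `P_{ij}(X)`. -/
def inAffinity [NormedAddCommGroup E] (X : Fin n → E) (ρ : ℝ) (i j : Fin n) : ℝ :=
  if i = j then 0
  else (condAffinity X (sigmaStar X ρ j) j i + condAffinity X (sigmaStar X ρ i) i j) / (2 * n)

/-- Output affinity `Q_{ij}(Y)`. -/
def outAffinity [NormedAddCommGroup F] (Y : Fin n → F) (i j : Fin n) : ℝ :=
  if i = j then 0
  else (1 + ‖Y i - Y j‖ ^ 2)⁻¹ /
    ∑ p ∈ Finset.univ.offDiag, (1 + ‖Y p.1 - Y p.2‖ ^ 2)⁻¹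

/-- The t-SNE loss `L_X(Y) = KL(P(X) ‖ Q(Y))`. -/
def tsneLoss {d : ℕ} [NormedAddCommGroup E] (X : Fin n → E) (ρ : ℝ)
    (Y : Fin n → EuclideanSpace ℝ (Fin d)) : ℝ :=
  ∑ p ∈ Finset.univ.offDiag,
    inAffinity X ρ p.1 p.2 * Real.log (inAffinity X ρ p.1 p.2 / outAffinity Y p.1 p.2)

/-- The set of stationary t-SNE outputs in `ℝ^d` for input `X` and perplexity `ρ`. -/
def TSNE [NormedAddCommGroup E] (d : ℕ) (ρ : ℝ) (X : Fin n → E) :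
    Set (Fin n → EuclideanSpace ℝ (Fin d)) :=
  {Y : Fin n → EuclideanSpace ℝ (Fin d) | fderiv ℝ (tsneLoss X ρ) Y = 0}

/-- The image of t-SNE: all stationary outputs over all `n`-point inputs in `ℝ^{n-1}`. -/
def IMTSNE (n d : ℕ) (ρ : ℝ) : Set (Fin n → EuclideanSpace ℝ (Fin d)) :=
  ⋃ X : Fin n → EuclideanSpace ℝ (Fin (n - 1)), TSNE d ρ X

/-- The `m`-th cluster of the partition of `[n]` encoded by the labelling `ℓ`. -/
def cluster (ℓ : Fin n → Fin k) (m : Fin k) : Finset (Fin n) :=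
  Finset.univ.filter fun i => ℓ i = m

/-- Average within-cluster distance `a(i)`. -/
def aScore [NormedAddCommGroup E] (X : Fin n → E) (ℓ : Fin n → Fin k) (i : Fin n) : ℝ :=
  (∑ j ∈ cluster ℓ (ℓ i), ‖X i - X j‖) / (((cluster ℓ (ℓ i)).card : ℝ) - 1)

/-- Closest average across-cluster distance `b(i)`. -/
def bScore [NormedAddCommGroup E] (X : Fin n → E) (ℓ : Fin n → Fin k) (i : Fin n) : ℝ :=
  sInf {r : ℝ | ∃ m : Fin k, m ≠ ℓ i ∧
    r = (∑ j ∈ cluster ℓ m, ‖X i - X j‖) / ((cluster ℓ m).card : ℝ)}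

/-- Silhouette score of point `i`. -/
def silhouette [NormedAddCommGroup E] (X : Fin n → E) (ℓ : Fin n → Fin k) (i : Fin n) : ℝ :=
  if (cluster ℓ (ℓ i)).card = 1 then 0
  else (bScore X ℓ i - aScore X ℓ i) / max (aScore X ℓ i) (bScore X ℓ i)

/-- Average silhouette score `S̄(X; C₁,…,C_k)`. -/
def avgSilhouette [NormedAddCommGroup E] (X : Fin n → E) (ℓ : Fin n → Fin k) : ℝ :=
  (∑ i, silhouette X ℓ i) / (n : ℝ)

/-- Centroid `E(S)` of the points indexed by `S`. -/
def centroid [NormedAddCommGroup E] [NormedSpace ℝ E] (X : Fin n → E)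
    (S : Finset (Fin n)) : E :=
  ((S.card : ℝ))⁻¹ • ∑ i ∈ S, X i

/-- Numerator (between-cluster term) of the Calinski–Harabasz index. -/
def chNum [NormedAddCommGroup E] [NormedSpace ℝ E] (X : Fin n → E) (ℓ : Fin n → Fin k) : ℝ :=
  ((k : ℝ) - 1)⁻¹ *
    ∑ m : Fin k, ((cluster ℓ m).card : ℝ) *
      ‖centroid X (cluster ℓ m) - centroid X Finset.univ‖ ^ 2

/-- Denominator (within-cluster term) of the Calinski–Harabasz index. -/
def chDen [NormedAddCommGroup E] [NormedSpace ℝ E] (X : Fin n → E) (ℓ : Fin n → Fin k) : ℝ :=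
  ((n : ℝ) - (k : ℝ))⁻¹ *
    ∑ m : Fin k, ∑ i ∈ cluster ℓ m, ‖X i - centroid X (cluster ℓ m)‖ ^ 2

/-- Calinski–Harabasz index, valued in `[0,∞]`, with the conventions `CH = 1` when both
numerator and denominator vanish and `CH = ∞` when only the denominator vanishes. -/
def CHindex [NormedAddCommGroup E] [NormedSpace ℝ E] (X : Fin n → E) (ℓ : Fin n → Fin k) :
    EReal :=
  if chDen X ℓ = 0 then (if chNum X ℓ = 0 then 1 else ⊤)
  else ((chNum X ℓ / chDen X ℓ : ℝ) : EReal)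

/-- Minimum between-cluster distance (numerator of the Dunn index). -/
def diNum [NormedAddCommGroup E] (X : Fin n → E) (ℓ : Fin n → Fin k) : ℝ :=
  sInf {r : ℝ | ∃ i j : Fin n, ℓ i ≠ ℓ j ∧ r = ‖X i - X j‖}

/-- Maximum within-cluster distance (denominator of the Dunn index). -/
def diDen [NormedAddCommGroup E] (X : Fin n → E) (ℓ : Fin n → Fin k) : ℝ :=
  sSup {r : ℝ | ∃ i j : Fin n, ℓ i = ℓ j ∧ r = ‖X i - X j‖}

/-- Dunn index, valued in `[0,∞]`, with the conventions `DI = 1` when both numerator and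
denominator vanish and `DI = ∞` when only the denominator vanishes. -/
def DIindex [NormedAddCommGroup E] (X : Fin n → E) (ℓ : Fin n → Fin k) : EReal :=
  if diDen X ℓ = 0 then (if diNum X ℓ = 0 then 1 else ⊤)
  else ((diNum X ℓ / diDen X ℓ : ℝ) : EReal)

/-- `Y` is an `(α, Y i₀)`-outlier configuration: there is a hyperplane (with unit normal `v`)
separating `Y i₀` from the remaining points with margin width at least
`α · max{1, diam(Y ∖ {Y i₀})}`. -/
def IsOutlierConfig [NormedAddCommGroup F] [InnerProductSpace ℝ F] (Y : Fin n → F)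
    (i0 : Fin n) (α : ℝ) : Prop :=
  0 < α ∧ ∃ v : F, ‖v‖ = 1 ∧ ∀ i : Fin n, i ≠ i0 →
    α * max 1 (Metric.diam (Y '' {i : Fin n | i ≠ i0})) ≤ ⟪Y i - Y i0, v⟫

/-- The outlier number `α(Y, y₀)`: the largest `α` for which `Y` is an `(α, Y i₀)`-outlier
configuration (`0` if there is none). -/
def outlierNumber [NormedAddCommGroup F] [InnerProductSpace ℝ F] (Y : Fin n → F)
    (i0 : Fin n) : ℝ :=
  sSup {α : ℝ | IsOutlierConfig Y i0 α}


/-!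
Adding the same `t ≥ 0` to every squared pairwise distance does not change t-SNE: the Gaussian
conditional affinities of point `i` only see its squared distances up to an additive constant,
and nearest neighbours are preserved. Such a configuration exists in `ℝ^{n-1}`: lift `x_i` to
`(x_i, √(t/2) e_i)` and note that `n` points always fit isometrically into `ℝ^{n-1}`. As
`t → ∞` all distances are `√t + O(1)`, so every silhouette is `O(1/√t)`; the average silhouette
is continuous in `t` and equals `S̄(X)` at `t = 0`, so the intermediate value theorem reaches
`ε S̄(X)`.
-/

open Filter Topology Set

theorem exists_linearIsometry_euclideanSpace {V : Type*} [NormedAddCommGroup V]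
    [InnerProductSpace ℝ V] [FiniteDimensional ℝ V] {m : ℕ} (h : Module.finrank ℝ V ≤ m) :
    Nonempty (V →ₗᵢ[ℝ] EuclideanSpace ℝ (Fin m)) := by
  let b := (stdOrthonormalBasis ℝ V).toBasis
  let v := EuclideanSpace.basisFun (Fin m) ℝ ∘ Fin.castLE h
  have hb : Orthonormal ℝ b := by
    rw [OrthonormalBasis.coe_toBasis]; exact (stdOrthonormalBasis ℝ V).orthonormal
  have hv : Orthonormal ℝ (b.constr ℝ v ∘ b) := by
    rw [show b.constr ℝ v ∘ b = v from funext (b.constr_basis ℝ v)]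
    exact (EuclideanSpace.basisFun (Fin m) ℝ).orthonormal.comp _ (Fin.castLE_injective h)
  exact ⟨(b.constr ℝ v).isometryOfOrthonormal hb hv⟩

theorem exists_euclideanSpace_norm_sub_eq {V : Type*} [NormedAddCommGroup V]
    [InnerProductSpace ℝ V] (Z : Fin n → V) :
    ∃ Y : Fin n → EuclideanSpace ℝ (Fin (n - 1)), ∀ i j, ‖Y i - Y j‖ = ‖Z i - Z j‖ := by
  cases n with
  | zero => exact ⟨finZeroElim, fun i => i.elim0⟩
  | succ m =>
    let W := Submodule.span ℝ (Set.range fun i : Fin m => Z i.succ - Z 0)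
    have : FiniteDimensional ℝ W := FiniteDimensional.span_of_finite ℝ (Set.finite_range _)
    have hW : Module.finrank ℝ W ≤ m :=
      (finrank_range_le_card (R := ℝ) _).trans_eq (Fintype.card_fin m)
    obtain ⟨f⟩ := exists_linearIsometry_euclideanSpace hW
    have hmem (i : Fin (m + 1)) : Z i - Z 0 ∈ W := by
      cases i using Fin.cases with
      | zero => simp
      | succ i => exact Submodule.subset_span ⟨i, rfl⟩
    refine ⟨fun i => f ⟨Z i - Z 0, hmem i⟩, fun i j => ?_⟩
    rw [← f.map_sub, f.norm_map]
    exact congrArg norm (sub_sub_sub_cancel_right (Z i) (Z j) (Z 0))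

theorem exists_euclideanSpace_sq_norm_sub_eq_add {V : Type*} [NormedAddCommGroup V]
    [InnerProductSpace ℝ V] (X : Fin n → V) {t : ℝ} (ht : 0 ≤ t) :
    ∃ Y : Fin n → EuclideanSpace ℝ (Fin (n - 1)),
      ∀ i j, i ≠ j → ‖Y i - Y j‖ ^ 2 = ‖X i - X j‖ ^ 2 + t := by
  let Z : Fin n → WithLp 2 (V × EuclideanSpace ℝ (Fin n)) :=
    fun i => WithLp.toLp 2 (X i, √(t / 2) • EuclideanSpace.single i 1)
  obtain ⟨Y, hY⟩ := exists_euclideanSpace_norm_sub_eq Z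
  refine ⟨Y, fun i j hij => ?_⟩
  have hsingle : ‖(EuclideanSpace.single i 1 - EuclideanSpace.single j 1 :
      EuclideanSpace ℝ (Fin n))‖ ^ 2 = 2 := by
    rw [norm_sub_sq_real, EuclideanSpace.inner_single_left]
    norm_num [hij]
  rw [hY, WithLp.prod_norm_sq_eq_of_L2]
  simp only [Z, WithLp.sub_fst, WithLp.sub_snd, WithLp.toLp_fst, WithLp.toLp_snd, ← smul_sub,
    norm_smul, mul_pow, hsingle, Real.norm_eq_abs, sq_abs, Real.sq_sqrt (div_nonneg ht two_pos.le)]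
  ring

section RowShift

variable {E' : Type*} [NormedAddCommGroup E] [NormedAddCommGroup E'] {X : Fin n → E}
  {Y : Fin n → E'} {c : Fin n → ℝ}

theorem nearestSet_eq_of_sq_norm_sub_eq_add
    (h : ∀ i j, i ≠ j → ‖Y i - Y j‖ ^ 2 = ‖X i - X j‖ ^ 2 + c i) (i : Fin n) :
    nearestSet Y i = nearestSet X i := by
  refine Finset.filter_congr fun j hj => forall₂_congr fun l hl => ?_
  rw [← sq_le_sq₀ (norm_nonneg _) (norm_nonneg _), ← sq_le_sq₀ (norm_nonneg _) (norm_nonneg _),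
    h i j (Finset.ne_of_mem_erase hj).symm, h i l (Finset.ne_of_mem_erase hl).symm,
    add_le_add_iff_right]

theorem condAffinity_eq_of_sq_norm_sub_eq_add
    (h : ∀ i j, i ≠ j → ‖Y i - Y j‖ ^ 2 = ‖X i - X j‖ ^ 2 + c i) (σ : ℝ) (i : Fin n) :
    condAffinity Y σ i = condAffinity X σ i := by
  funext j
  simp only [condAffinity, nearestSet_eq_of_sq_norm_sub_eq_add h]
  refine ite_congr rfl (fun _ => rfl) fun hji => ite_congr rfl (fun _ => rfl) fun _ => ?_
  -- the row shift contributes the same factor `exp (-c i / (2σ²))` to numerator and denominator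
  have hexp (l : Fin n) (hl : l ≠ i) : Real.exp (-‖Y i - Y l‖ ^ 2 / (2 * σ ^ 2)) =
      Real.exp (-c i / (2 * σ ^ 2)) * Real.exp (-‖X i - X l‖ ^ 2 / (2 * σ ^ 2)) := by
    rw [← Real.exp_add, h i l hl.symm]
    ring_nf
  rw [hexp j hji, Finset.sum_congr rfl fun l hl => hexp l (Finset.ne_of_mem_erase hl),
    ← Finset.mul_sum, mul_div_mul_left _ _ (Real.exp_ne_zero _)]

theorem TSNE_eq_of_sq_norm_sub_eq_add
    (h : ∀ i j, i ≠ j → ‖Y i - Y j‖ ^ 2 = ‖X i - X j‖ ^ 2 + c i) (d : ℕ) (ρ : ℝ) :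
    TSNE d ρ Y = TSNE d ρ X := by
  have hcond := condAffinity_eq_of_sq_norm_sub_eq_add h
  have hcalib : IsCalibrated Y ρ = IsCalibrated X ρ := by
    funext i σ
    simp only [IsCalibrated, hcond]
  have hloss : tsneLoss (d := d) Y ρ = tsneLoss X ρ := by
    funext Z
    simp only [tsneLoss, inAffinity, sigmaStar, hcalib, hcond]
  simp only [TSNE, hloss]

end RowShift

theorem abs_sub_div_max_le_div {a b s M : ℝ} (hs : 0 < s) (ha : a ∈ Icc s (s + M))
    (hb : b ∈ Icc s (s + M)) : |(b - a) / max a b| ≤ M / s := by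
  have hmax : s ≤ max a b := ha.1.trans (le_max_left a b)
  rw [abs_div, abs_of_pos (hs.trans_le hmax)]
  exact div_le_div₀ (by linarith [ha.1, ha.2])
    (abs_sub_le_iff.2 ⟨by linarith [ha.1, hb.2], by linarith [hb.1, ha.2]⟩) hs hmax

-- The silhouette scores of an arbitrary dissimilarity matrix: the configurations realizing
-- shifted distances are not continuous in the shift, but their distance matrices are.
section Dissimilarity

variable (D : Fin n → Fin n → ℝ) (ℓ : Fin n → Fin k)

def clusterMeanDist (i : Fin n) (m : Fin k) : ℝ :=
  (∑ j ∈ cluster ℓ m, D i j) / ((cluster ℓ m).card : ℝ)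

def aScoreOf (i : Fin n) : ℝ :=
  (∑ j ∈ cluster ℓ (ℓ i), D i j) / (((cluster ℓ (ℓ i)).card : ℝ) - 1)

def bScoreOf (i : Fin n) : ℝ :=
  sInf {r : ℝ | ∃ m : Fin k, m ≠ ℓ i ∧ r = clusterMeanDist D ℓ i m}

def silhouetteOf (i : Fin n) : ℝ :=
  if (cluster ℓ (ℓ i)).card = 1 then 0
  else (bScoreOf D ℓ i - aScoreOf D ℓ i) / max (aScoreOf D ℓ i) (bScoreOf D ℓ i)

def avgSilhouetteOf : ℝ :=
  (∑ i, silhouetteOf D ℓ i) / (n : ℝ)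

theorem avgSilhouette_eq_avgSilhouetteOf [NormedAddCommGroup E] (X : Fin n → E) :
    avgSilhouette X ℓ = avgSilhouetteOf (fun i j => ‖X i - X j‖) ℓ :=
  rfl

variable {D ℓ}

theorem mem_cluster_self (i : Fin n) : i ∈ cluster ℓ (ℓ i) :=
  Finset.mem_filter.2 ⟨Finset.mem_univ i, rfl⟩

theorem ne_of_mem_cluster {i j : Fin n} {m : Fin k} (hj : j ∈ cluster ℓ m) (hm : m ≠ ℓ i) :
    j ≠ i := by
  rintro rfl
  exact hm (Finset.mem_filter.1 hj).2.symm

theorem aScoreOf_eq_expect {i : Fin n} (hD : D i i = 0) :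
    aScoreOf D ℓ i = 𝔼 j ∈ (cluster ℓ (ℓ i)).erase i, D i j := by
  rw [Finset.expect_eq_sum_div_card, Finset.sum_erase _ hD,
    Finset.card_erase_of_mem (mem_cluster_self i),
    Nat.cast_sub (Finset.card_pos.2 ⟨i, mem_cluster_self i⟩), Nat.cast_one]
  rfl

theorem clusterMeanDist_eq_expect (i : Fin n) (m : Fin k) :
    clusterMeanDist D ℓ i m = 𝔼 j ∈ cluster ℓ m, D i j :=
  (Finset.expect_eq_sum_div_card _ _).symm

theorem bScoreOf_eq_inf' (i : Fin n) (hne : (Finset.univ.erase (ℓ i)).Nonempty) :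
    bScoreOf D ℓ i = (Finset.univ.erase (ℓ i)).inf' hne (clusterMeanDist D ℓ i) := by
  rw [Finset.inf'_eq_csInf_image, bScoreOf]
  congr 1
  ext r
  simp [eq_comm]

theorem univ_erase_nonempty (hk : 1 < k) (m : Fin k) : (Finset.univ.erase m).Nonempty :=
  (Finset.univ_nontrivial_iff.2 (Fin.nontrivial_iff_two_le.2 hk)).erase_nonempty

variable {s M : ℝ} {i : Fin n}

theorem aScoreOf_mem_Icc (hD : ∀ j, j ≠ i → D i j ∈ Icc s (s + M)) (hdiag : D i i = 0)
    (hcard : 1 < (cluster ℓ (ℓ i)).card) : aScoreOf D ℓ i ∈ Icc s (s + M) := by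
  have hne : ((cluster ℓ (ℓ i)).erase i).Nonempty := by
    rw [← Finset.card_pos, Finset.card_erase_of_mem (mem_cluster_self i)]
    exact Nat.sub_pos_of_lt hcard
  have hmem (j) (hj : j ∈ (cluster ℓ (ℓ i)).erase i) := hD j (Finset.ne_of_mem_erase hj)
  rw [aScoreOf_eq_expect hdiag]
  exact ⟨Finset.le_expect hne fun j hj => (hmem j hj).1,
    Finset.expect_le hne fun j hj => (hmem j hj).2⟩

theorem bScoreOf_mem_Icc (hD : ∀ j, j ≠ i → D i j ∈ Icc s (s + M)) (hk : 1 < k)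
    (hcard : ∀ m, (cluster ℓ m).Nonempty) : bScoreOf D ℓ i ∈ Icc s (s + M) := by
  have hmean (m) (hm : m ∈ Finset.univ.erase (ℓ i)) : clusterMeanDist D ℓ i m ∈ Icc s (s + M) := by
    have hmem (j) (hj : j ∈ cluster ℓ m) := hD j (ne_of_mem_cluster hj (Finset.ne_of_mem_erase hm))
    rw [clusterMeanDist_eq_expect]
    exact ⟨Finset.le_expect (hcard m) fun j hj => (hmem j hj).1,
      Finset.expect_le (hcard m) fun j hj => (hmem j hj).2⟩
  obtain ⟨m, hm⟩ := univ_erase_nonempty hk (ℓ i)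
  rw [bScoreOf_eq_inf' i ⟨m, hm⟩]
  exact ⟨Finset.le_inf' _ _ fun m hm => (hmean m hm).1, (Finset.inf'_le _ hm).trans (hmean m hm).2⟩

theorem abs_silhouetteOf_le (hD : ∀ j, j ≠ i → D i j ∈ Icc s (s + M)) (hdiag : D i i = 0)
    (hk : 1 < k) (hcard : ∀ m, 1 < (cluster ℓ m).card) (hs : 0 < s) :
    |silhouetteOf D ℓ i| ≤ M / s := by
  rw [silhouetteOf, if_neg (hcard (ℓ i)).ne']
  exact abs_sub_div_max_le_div hs (aScoreOf_mem_Icc hD hdiag (hcard (ℓ i)))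
    (bScoreOf_mem_Icc hD hk fun m => Finset.card_pos.1 (zero_lt_one.trans (hcard m)))

end Dissimilarity

theorem continuousOn_avgSilhouetteOf {D : ℝ → Fin n → Fin n → ℝ} (ℓ : Fin n → Fin k)
    {S : Set ℝ} (hk : 1 < k) (hD : ∀ i j, Continuous fun t => D t i j)
    (hmax : ∀ t ∈ S, ∀ i, max (aScoreOf (D t) ℓ i) (bScoreOf (D t) ℓ i) ≠ 0) :
    ContinuousOn (fun t => avgSilhouetteOf (D t) ℓ) S := by
  refine (continuousOn_finsetSum _ fun i _ => ?_).div_const _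
  have ha : Continuous fun t => aScoreOf (D t) ℓ i :=
    (continuous_finsetSum _ fun j _ => hD i j).div_const _
  have hb : Continuous fun t => bScoreOf (D t) ℓ i := by
    simp only [bScoreOf_eq_inf' i (univ_erase_nonempty hk (ℓ i))]
    exact Continuous.finset_inf'_apply _ fun m _ =>
      (continuous_finsetSum _ fun j _ => hD i j).div_const _
  by_cases hi : (cluster ℓ (ℓ i)).card = 1
  · simp only [silhouetteOf, hi, if_true]
    exact continuousOn_const
  · simp only [silhouetteOf, hi, if_false]
    exact (hb.sub ha).continuousOn.div (ha.max hb).continuousOn fun t ht => hmax t ht i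

section ShiftedDist

variable [NormedAddCommGroup E] (X : Fin n → E)

def shiftedDist (t : ℝ) (i j : Fin n) : ℝ :=
  if i = j then 0 else √(‖X i - X j‖ ^ 2 + t)

theorem shiftedDist_eq_norm_sub {E' : Type*} [NormedAddCommGroup E'] {Y : Fin n → E'} {t : ℝ}
    (hY : ∀ i j, i ≠ j → ‖Y i - Y j‖ ^ 2 = ‖X i - X j‖ ^ 2 + t) :
    shiftedDist X t = fun i j => ‖Y i - Y j‖ := by
  funext i j
  by_cases hij : i = j
  · simp [shiftedDist, hij]
  · rw [shiftedDist, if_neg hij, ← hY i j hij, Real.sqrt_sq (norm_nonneg _)]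

theorem shiftedDist_zero : shiftedDist X 0 = fun i j => ‖X i - X j‖ :=
  shiftedDist_eq_norm_sub X fun _ _ _ => (add_zero _).symm

theorem continuous_shiftedDist (i j : Fin n) : Continuous fun t => shiftedDist X t i j := by
  unfold shiftedDist
  split_ifs
  · exact continuous_const
  · exact (continuous_const.add continuous_id).sqrt

theorem shiftedDist_mem_Icc {M t : ℝ} (hM : ∀ i j, ‖X i - X j‖ ≤ M) (ht : 0 ≤ t) {i j : Fin n}
    (hij : i ≠ j) : shiftedDist X t i j ∈ Icc (√t) (√t + M) := by
  rw [shiftedDist, if_neg hij]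
  refine ⟨Real.sqrt_le_sqrt (le_add_of_nonneg_left (sq_nonneg _)), ?_⟩
  calc √(‖X i - X j‖ ^ 2 + t) ≤ ‖X i - X j‖ + √t :=
        Real.sqrt_le_iff.2 ⟨by positivity, by
          nlinarith [Real.sq_sqrt ht, Real.sqrt_nonneg t, norm_nonneg (X i - X j)]⟩
    _ ≤ √t + M := by linarith [hM i j]

end ShiftedDist

theorem exists_nonneg_eq_mul_of_tendsto_zero {f : ℝ → ℝ} (hf : ContinuousOn f (Ici 0))
    (hlim : Tendsto f atTop (𝓝 0)) {ε : ℝ} (hε : 0 < ε) (hε1 : ε ≤ 1) :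
    ∃ t, 0 ≤ t ∧ f t = ε * f 0 := by
  rcases eq_or_ne (f 0) 0 with h0 | h0
  · exact ⟨0, le_rfl, by rw [h0, mul_zero]⟩
  have hpos : 0 < |ε * f 0| := abs_pos.2 (mul_ne_zero hε.ne' h0)
  obtain ⟨T, hT, hT0⟩ :=
    ((hlim.eventually (eventually_abs_sub_lt 0 hpos)).and (eventually_ge_atTop 0)).exists
  rw [sub_zero, abs_mul, abs_of_pos hε] at hT
  have hmem : ε * f 0 ∈ uIcc (f 0) (f T) := by
    rw [mem_uIcc]
    rcases h0.lt_or_gt with hneg | hpos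
    · rw [abs_of_neg hneg] at hT
      exact Or.inl ⟨by nlinarith, by linarith [neg_abs_le (f T)]⟩
    · rw [abs_of_pos hpos] at hT
      exact Or.inr ⟨by linarith [le_abs_self (f T)], by nlinarith⟩
  obtain ⟨t, ht, hft⟩ := intermediate_value_uIcc
    (hf.mono fun t ht => (uIcc_of_le hT0 ▸ ht).1) hmem
  exact ⟨t, (uIcc_of_le hT0 ▸ ht).1, hft⟩

section ShiftedSilhouette

variable [NormedAddCommGroup E] {X : Fin n → E} {ℓ : Fin n → Fin k}

theorem tendsto_avgSilhouetteOf_shiftedDist (hk : 1 < k)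
    (hcard : ∀ m, 1 < (cluster ℓ m).card) :
    Tendsto (fun t => avgSilhouetteOf (shiftedDist X t) ℓ) atTop (𝓝 0) := by
  obtain ⟨M, hM⟩ := Finite.exists_le fun p : Fin n × Fin n => ‖X p.1 - X p.2‖
  replace hM (i j : Fin n) := hM (i, j)
  have hsil (i : Fin n) :
      Tendsto (fun t => silhouetteOf (shiftedDist X t) ℓ i) atTop (𝓝 0) := by
    refine squeeze_zero_norm' ?_ ((tendsto_const_nhds (x := M)).div_atTop Real.tendsto_sqrt_atTop)
    filter_upwards [eventually_gt_atTop 0] with t ht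
    exact abs_silhouetteOf_le (fun j hji => shiftedDist_mem_Icc X hM ht.le hji.symm)
      (if_pos rfl) hk hcard (Real.sqrt_pos.2 ht)
  unfold avgSilhouetteOf
  simpa only [Finset.sum_const_zero, zero_div] using
    (tendsto_finsetSum Finset.univ fun i _ => hsil i).div_const (n : ℝ)

theorem continuousOn_avgSilhouetteOf_shiftedDist (hk : 1 < k)
    (hcard : ∀ m, 1 < (cluster ℓ m).card)
    (hwd : ∀ i, max (aScore X ℓ i) (bScore X ℓ i) ≠ 0) :
    ContinuousOn (fun t => avgSilhouetteOf (shiftedDist X t) ℓ) (Ici 0) := by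
  obtain ⟨M, hM⟩ := Finite.exists_le fun p : Fin n × Fin n => ‖X p.1 - X p.2‖
  replace hM (i j : Fin n) := hM (i, j)
  refine continuousOn_avgSilhouetteOf ℓ hk (continuous_shiftedDist X) fun t ht i => ?_
  rcases (mem_Ici.1 ht).eq_or_lt with rfl | ht
  · rw [shiftedDist_zero]
    exact hwd i
  · have ha := aScoreOf_mem_Icc (fun j hji => shiftedDist_mem_Icc X hM ht.le hji.symm)
      (if_pos rfl) (hcard (ℓ i))
    exact ((Real.sqrt_pos.2 ht).trans_le (ha.1.trans (le_max_left _ _))).ne'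

end ShiftedSilhouette

theorem silhouette_impostor_general (n k d : ℕ) (hk : 1 < k)
    (X : Fin n → EuclideanSpace ℝ (Fin (n - 1)))
    (ℓ : Fin n → Fin k)
    (hcard : ∀ m : Fin k, 1 < (cluster ℓ m).card)
    (hwd : ∀ i : Fin n, max (aScore X ℓ i) (bScore X ℓ i) ≠ 0) :
    ∀ ε : ℝ, 0 < ε → ε ≤ 1 →
      ∃ Xε : Fin n → EuclideanSpace ℝ (Fin (n - 1)),
        avgSilhouette Xε ℓ = ε * avgSilhouette X ℓ ∧
        ∀ ρ : ℝ, 1 < ρ → ρ < (n : ℝ) - 1 → TSNE d ρ X = TSNE d ρ Xε := by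
  intro ε hε hε1
  obtain ⟨t, ht, hsil⟩ := exists_nonneg_eq_mul_of_tendsto_zero
    (continuousOn_avgSilhouetteOf_shiftedDist hk hcard hwd)
    (tendsto_avgSilhouetteOf_shiftedDist hk hcard) hε hε1
  obtain ⟨Y, hY⟩ := exists_euclideanSpace_sq_norm_sub_eq_add X ht
  refine ⟨Y, ?_, fun ρ _ _ => (TSNE_eq_of_sq_norm_sub_eq_add hY d ρ).symm⟩
  rw [avgSilhouette_eq_avgSilhouetteOf, avgSilhouette_eq_avgSilhouetteOf,
    ← shiftedDist_eq_norm_sub X hY, ← shiftedDist_zero, hsil]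

/-- Theorem `unclustHammer`: any stationary t-SNE output can be produced by
an arbitrarily unclustered (in average silhouette score) input. -/
theorem silhouette_impostor (n k d : ℕ) (hk : 1 < k) (hkn : k < n) (hd : 1 ≤ d)
    (X : Fin n → EuclideanSpace ℝ (Fin (n - 1)))
    (ℓ : Fin n → Fin k)
    (hcard : ∀ m : Fin k, 1 < (cluster ℓ m).card)
    (hwd : ∀ i : Fin n, max (aScore X ℓ i) (bScore X ℓ i) ≠ 0) :
    ∀ ε : ℝ, 0 < ε → ε ≤ 1 →
      ∃ Xε : Fin n → EuclideanSpace ℝ (Fin (n - 1)),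
        avgSilhouette Xε ℓ = ε * avgSilhouette X ℓ ∧
        ∀ ρ : ℝ, 1 < ρ → ρ < (n : ℝ) - 1 → TSNE d ρ X = TSNE d ρ Xε :=
  silhouette_impostor_general n k d hk X ℓ hcard hwd

end TSNEPaper
end
end

section
/- Fix n > 2 and perplexity ρ ∈ (1, n−1). For every ε > 0 and every pair of outputs Y, Y' ∈ IM_ρ (i.e., Y and Y' are each stationary t-SNE outputs of some n-point dataset), there exist n-point datasets X = {x_1,…,x_n} and X' = {x'_1,…,x'_n} in ℝ^{n−1} such that for all i ≠ j, 1 − ε ≤ ‖x_i − x_j‖² / ‖x'_i − x'_j‖² ≤ 1 + ε, and yet Y ∈ TSNE_ρ(X) and Y' ∈ TSNE_ρ(X'). -/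
open scoped BigOperators RealInnerProductSpace
noncomputable section

namespace TSNEPaper

variable {n k : ℕ} {E F : Type*}

/-!
The conditional affinities `P_{j|i}(X; σ)` only see the squared distances `‖x_i - x_j‖²` up to
a common additive constant `c`: the nearest-neighbour sets are unchanged, and for `σ > 0` the
factor `exp (-c / (2σ²))` cancels against the normalisation. Every shift `c ≥ 0` is
realisable in `ℝ^{n-1}`, by lifting `x_i` to `(x_i, √(c/2) eᵢ)`. Shifting the inputs of `Y` and
of `Y'` by the same large `c` therefore keeps both stationary while driving every ratio of
squared distances to `1`.
-/

section Realization

variable [NormedAddCommGroup E] [InnerProductSpace ℝ E]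

theorem exists_linearIsometry_euclideanSpace_of_finrank_le [FiniteDimensional ℝ E] {m : ℕ}
    (h : Module.finrank ℝ E ≤ m) :
    Nonempty (E →ₗᵢ[ℝ] EuclideanSpace ℝ (Fin m)) := by
  let b := stdOrthonormalBasis ℝ E
  let e : Fin (Module.finrank ℝ E) → EuclideanSpace ℝ (Fin m) :=
    fun i => EuclideanSpace.single (Fin.castLE h i) 1
  have he : Orthonormal ℝ e :=
    EuclideanSpace.orthonormal_single.comp _ (Fin.castLE_injective h)
  refine ⟨(b.toBasis.constr ℝ e).isometryOfOrthonormal (v := b.toBasis)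
    (by rw [b.coe_toBasis]; exact b.orthonormal) ?_⟩
  simpa [Function.comp_def] using he

theorem exists_euclideanSpace_isometric_copy (w : Fin n → E) :
    ∃ z : Fin n → EuclideanSpace ℝ (Fin (n - 1)), ∀ i j, ‖z i - z j‖ = ‖w i - w j‖ := by
  rcases n with _ | m
  · exact ⟨finZeroElim, finZeroElim⟩
  obtain ⟨L⟩ := exists_linearIsometry_euclideanSpace_of_finrank_le
    (finrank_vectorSpan_range_le ℝ w (Fintype.card_fin _))
  have hw : ∀ i, w i - w 0 ∈ vectorSpan ℝ (Set.range w) := fun i =>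
    vsub_mem_vectorSpan ℝ (Set.mem_range_self i) (Set.mem_range_self 0)
  refine ⟨fun i => L ⟨w i - w 0, hw i⟩, fun i j => ?_⟩
  rw [← map_sub, L.norm_map]
  simp

theorem exists_sq_dist_add (X : Fin n → E) {c : ℝ} (hc : 0 ≤ c) :
    ∃ W : Fin n → EuclideanSpace ℝ (Fin (n - 1)),
      ∀ i j, i ≠ j → ‖W i - W j‖ ^ 2 = ‖X i - X j‖ ^ 2 + c := by
  let q := √(c / 2)
  have hq : q ^ 2 = c / 2 := Real.sq_sqrt (by positivity)
  -- the new orthonormal directions add `2 q² = c` to every squared distance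
  let V : Fin n → WithLp 2 (E × EuclideanSpace ℝ (Fin n)) :=
    fun i => WithLp.toLp 2 (X i, EuclideanSpace.single i q)
  obtain ⟨W, hW⟩ := exists_euclideanSpace_isometric_copy V
  refine ⟨W, fun i j hij => ?_⟩
  rw [hW, WithLp.prod_norm_sq_eq_of_L2]
  simp [V, norm_sub_sq_real, EuclideanSpace.inner_single_left, hij, hq]

end Realization

section ShiftInvariance

variable [NormedAddCommGroup E] {X Z : Fin n → E} {c : ℝ}

theorem nearestSet_eq_of_sq_dist_add
    (h : ∀ i j, i ≠ j → ‖Z i - Z j‖ ^ 2 = ‖X i - X j‖ ^ 2 + c) (i : Fin n) :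
    nearestSet Z i = nearestSet X i := by
  have key : ∀ a b, a ≠ i → b ≠ i →
      (‖Z i - Z a‖ ≤ ‖Z i - Z b‖ ↔ ‖X i - X a‖ ≤ ‖X i - X b‖) := fun a b ha hb => by
    rw [← sq_le_sq₀ (norm_nonneg _) (norm_nonneg _), h i a ha.symm, h i b hb.symm,
      add_le_add_iff_right, sq_le_sq₀ (norm_nonneg _) (norm_nonneg _)]
  refine Finset.filter_congr fun j hj => forall₂_congr fun l hl => ?_
  exact key j l (Finset.ne_of_mem_erase hj) (Finset.ne_of_mem_erase hl)

theorem condAffinity_eq_of_sq_dist_add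
    (h : ∀ i j, i ≠ j → ‖Z i - Z j‖ ^ 2 = ‖X i - X j‖ ^ 2 + c) :
    condAffinity Z = condAffinity X := by
  funext σ i j
  by_cases hji : j = i
  · simp [condAffinity, hji]
  by_cases hσ : σ = 0
  · simp [condAffinity, hσ, nearestSet_eq_of_sq_dist_add h]
  simp only [condAffinity, if_neg hji, if_neg hσ]
  have hexp : ∀ a, a ≠ i → Real.exp (-‖Z i - Z a‖ ^ 2 / (2 * σ ^ 2)) =
      Real.exp (-c / (2 * σ ^ 2)) * Real.exp (-‖X i - X a‖ ^ 2 / (2 * σ ^ 2)) := by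
    intro a ha
    rw [← Real.exp_add, h i a ha.symm]
    congr 1
    ring
  rw [hexp j hji, Finset.sum_congr rfl fun l hl => hexp l (Finset.ne_of_mem_erase hl),
    ← Finset.mul_sum, mul_div_mul_left _ _ (Real.exp_ne_zero _)]

end ShiftInvariance

theorem TSNE_eq_of_condAffinity_eq [NormedAddCommGroup E] {X Z : Fin n → E}
    (h : condAffinity Z = condAffinity X) (d : ℕ) (ρ : ℝ) :
    TSNE d ρ Z = TSNE d ρ X := by
  unfold TSNE tsneLoss inAffinity sigmaStar IsCalibrated
  rw [h]

theorem add_div_add_mem_Icc {ε a b c : ℝ} (hε : 0 < ε) (ha : 0 ≤ a) (hb : 0 ≤ b) (hc : 0 < c)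
    (hac : a ≤ ε * c) (hbc : b ≤ ε * c) :
    (a + c) / (b + c) ∈ Set.Icc (1 - ε) (1 + ε) := by
  have hbc0 : 0 < b + c := by linarith
  constructor
  · rw [le_div_iff₀ hbc0]
    nlinarith [mul_nonneg hε.le hb]
  · rw [div_le_iff₀ hbc0]
    nlinarith [mul_nonneg hε.le hb, mul_nonneg hε.le hc.le]

theorem perturb_hammer_general (n d : ℕ) (ρ : ℝ) :
    ∀ ε : ℝ, 0 < ε → ∀ Y Y' : Fin n → EuclideanSpace ℝ (Fin d),
      Y ∈ IMTSNE n d ρ → Y' ∈ IMTSNE n d ρ →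
      ∃ X X' : Fin n → EuclideanSpace ℝ (Fin (n - 1)),
        (∀ i j : Fin n, i ≠ j →
          1 - ε ≤ ‖X i - X j‖ ^ 2 / ‖X' i - X' j‖ ^ 2 ∧
          ‖X i - X j‖ ^ 2 / ‖X' i - X' j‖ ^ 2 ≤ 1 + ε) ∧
        Y ∈ TSNE d ρ X ∧ Y' ∈ TSNE d ρ X' := by
  intro ε hε Y Y' hY hY'
  obtain ⟨X₀, hX₀⟩ := Set.mem_iUnion.mp hY
  obtain ⟨X₀', hX₀'⟩ := Set.mem_iUnion.mp hY'
  obtain ⟨M, hM⟩ := Finite.exists_le fun p : Fin n × Fin n =>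
    max (‖X₀ p.1 - X₀ p.2‖ ^ 2) (‖X₀' p.1 - X₀' p.2‖ ^ 2)
  set c := max M 1 / ε
  have hc : 0 < c := by positivity
  have hεc : ε * c = max M 1 := mul_div_cancel₀ _ hε.ne'
  obtain ⟨X, hX⟩ := exists_sq_dist_add X₀ hc.le
  obtain ⟨X', hX'⟩ := exists_sq_dist_add X₀' hc.le
  refine ⟨X, X', fun i j hij => ?_, ?_, ?_⟩
  · have hMij := (hM (i, j)).trans (le_max_left M 1)
    rw [← hεc] at hMij
    rw [hX i j hij, hX' i j hij]
    exact add_div_add_mem_Icc hε (sq_nonneg _) (sq_nonneg _) hc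
      (le_of_max_le_left hMij) (le_of_max_le_right hMij)
  · rwa [TSNE_eq_of_condAffinity_eq (condAffinity_eq_of_sq_dist_add hX)]
  · rwa [TSNE_eq_of_condAffinity_eq (condAffinity_eq_of_sq_dist_add hX')]

/-- Theorem `perturbhammer`: any two stationary t-SNE outputs can be produced
by inputs whose squared interpoint distances agree up to a factor of `1 ± ε`. -/
theorem perturb_hammer (n d : ℕ) (hn : 2 < n) (hd : 1 ≤ d)
    (ρ : ℝ) (hρ : 1 < ρ) (hρ' : ρ < (n : ℝ) - 1) :
    ∀ ε : ℝ, 0 < ε → ∀ Y Y' : Fin n → EuclideanSpace ℝ (Fin d),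
      Y ∈ IMTSNE n d ρ → Y' ∈ IMTSNE n d ρ →
      ∃ X X' : Fin n → EuclideanSpace ℝ (Fin (n - 1)),
        (∀ i j : Fin n, i ≠ j →
          1 - ε ≤ ‖X i - X j‖ ^ 2 / ‖X' i - X' j‖ ^ 2 ∧
          ‖X i - X j‖ ^ 2 / ‖X' i - X' j‖ ^ 2 ≤ 1 + ε) ∧
        Y ∈ TSNE d ρ X ∧ Y' ∈ TSNE d ρ X' :=
  perturb_hammer_general n d ρ

end TSNEPaper
end
end

section
/- Fix n > 2 and perplexity ρ ∈ (1, n−1). Let Y = {y_0, y_1,…,y_{n−1}} ∈ IM_ρ be a stationary t-SNE embedding, with y_0 the designated outlier point. Then for every n-point input X = {x_0, x_1,…,x_{n−1}} ⊂ ℝ^{n−1} such that Y ∈ TSNE_ρ(X), the outlier number of Y with respect to y_0 satisfies α(Y, y_0) ≤ √( 1 + (1 + 2/(n−2)) · ( 8 / (1 + Σ_{i=1}^{n−1} P_{0|i}(X)) ) ), where P_{0|i}(X) is the conditional input affinity of point i toward point 0 at its perplexity-calibrated bandwidth σ_i*. -/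
open scoped BigOperators RealInnerProductSpace
noncomputable section

namespace TSNEPaper

variable {n k : ℕ} {E F : Type*}

/-!
Move the outlier alone, `y₀ ↦ y₀ + t z` with `z = y₀ - c` and `c` the centroid of the other
points. At a stationary point the derivative in `t` vanishes, which balances attraction against
repulsion:
`∑ⱼ P₀ⱼ ⟪y₀ - yⱼ, z⟫ / (1 + ‖y₀ - yⱼ‖²) = (∑ⱼ ⟪y₀ - yⱼ, z⟫ / (1 + ‖y₀ - yⱼ‖²)²) / Z`,
where `Z = ∑_{k ≠ l} (1 + ‖y_k - y_l‖²)⁻¹`. If a hyperplane separates `y₀` with margin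
`m = α M`, `M = max 1 D`, `D` the diameter of the other points, then `‖y₀ - yⱼ‖ ≥ m` and
`⟪y₀ - yⱼ, z⟫ = ‖y₀ - yⱼ‖² ± D ‖y₀ - yⱼ‖`. Beyond `m` the attraction terms increase and the
repulsion terms decrease with the distance, and the `(n - 1)(n - 2)` pairs among the other points
give `Z ≥ (n - 1)(n - 2) / (1 + M²)`. What is left is
`q (m - D)(1 + m²) ≤ (1 + M²)(m + D)` with `q = (n - 2) ∑ⱼ P₀ⱼ = (n - 2)(1 + ∑ᵢ P_{0|i}) / (2n)`,
and even in the least favourable case `D = M` this forces `α² ≤ 1 + 4 / q`.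
-/

lemma sum_offDiag_eq_sum_sum {ι M : Type*} [DecidableEq ι] [AddCommMonoid M] (s : Finset ι)
    (f : ι → ι → M) (hf : ∀ i, f i i = 0) :
    ∑ p ∈ s.offDiag, f p.1 p.2 = ∑ i ∈ s, ∑ j ∈ s, f i j := by
  rw [← Finset.sum_product' (f := f), ← Finset.diag_union_offDiag,
    Finset.sum_union (Finset.disjoint_diag_offDiag _), Finset.sum_diag]
  simp [hf]

lemma cast_card_univ_erase (i : Fin n) : ((Finset.univ.erase i).card : ℝ) = n - 1 := by
  rw [Finset.card_erase_of_mem (Finset.mem_univ i), Finset.card_univ, Fintype.card_fin,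
    Nat.cast_pred (Fin.pos i)]

lemma sum_offDiag_mul_inner_sub_single [NormedAddCommGroup F] [InnerProductSpace ℝ F]
    (K : Fin n → Fin n → ℝ) (hK : ∀ i j, K i j = K j i) (Y : Fin n → F) (i0 : Fin n) (z : F) :
    ∑ p ∈ Finset.univ.offDiag, K p.1 p.2 *
        ⟪Y p.1 - Y p.2, (Pi.single i0 z : Fin n → F) p.1 - (Pi.single i0 z : Fin n → F) p.2⟫ =
      2 * ∑ j ∈ Finset.univ.erase i0, K i0 j * ⟪Y i0 - Y j, z⟫ := by
  set s : Fin n → F := Pi.single i0 z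
  have hsplit (i j : Fin n) : K i j * ⟪Y i - Y j, s i - s j⟫ =
      K i j * ⟪Y i - Y j, s i⟫ + K j i * ⟪Y j - Y i, s j⟫ := by
    have hrev : ⟪Y j - Y i, s j⟫ = -⟪Y i - Y j, s j⟫ := by rw [← inner_neg_left, neg_sub]
    rw [inner_sub_right, hK j i, hrev]
    ring
  have hswap : ∑ i, ∑ j, K j i * ⟪Y j - Y i, s j⟫ = ∑ i, ∑ j, K i j * ⟪Y i - Y j, s i⟫ :=
    Finset.sum_comm
  rw [sum_offDiag_eq_sum_sum _ (fun i j => K i j * ⟪Y i - Y j, s i - s j⟫) fun i => by simp]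
  simp_rw [hsplit, Finset.sum_add_distrib, hswap, ← two_mul]
  rw [Finset.sum_eq_single i0 (fun i _ hi => by simp [s, hi]) (by simp),
    ← Finset.sum_erase (a := i0) _ (by simp)]
  simp [s]

lemma sq_sub_mul_div_one_add_sq_le {m r D : ℝ} (hm : 0 < m) (hD : 0 ≤ D) (hDm : D ≤ m)
    (hr : m ≤ r) : (m ^ 2 - m * D) / (1 + m ^ 2) ≤ (r ^ 2 - r * D) / (1 + r ^ 2) := by
  rw [div_le_div_iff₀ (by positivity) (by positivity)]
  have hp : 0 ≤ D * m * r := mul_nonneg (mul_nonneg hD hm.le) (hm.le.trans hr)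
  nlinarith [mul_nonneg (sub_nonneg.2 hr) (by nlinarith [hp] : (0:ℝ) ≤ r + m - D + D * m * r)]

lemma sq_add_mul_div_one_add_sq_sq_le {m r D : ℝ} (hm : 1 ≤ m) (hD : 0 ≤ D) (hr : m ≤ r) :
    (r ^ 2 + r * D) / (1 + r ^ 2) ^ 2 ≤ (m ^ 2 + m * D) / (1 + m ^ 2) ^ 2 := by
  have hr0 : 0 ≤ r := by linarith
  have hrm : 1 ≤ r * m := by nlinarith
  have hA : r * (1 + m ^ 2) ≤ m * (1 + r ^ 2) := by
    nlinarith [mul_nonneg (sub_nonneg.2 hr) (sub_nonneg.2 hrm)]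
  have hB : r * (1 + m ^ 2) ^ 2 ≤ m * (1 + r ^ 2) ^ 2 := by nlinarith [hA]
  have hC : r ^ 2 * (1 + m ^ 2) ^ 2 ≤ m ^ 2 * (1 + r ^ 2) ^ 2 := by
    nlinarith [mul_le_mul hA hA (by positivity : 0 ≤ r * (1 + m ^ 2)) (by positivity)]
  rw [div_le_div_iff₀ (by positivity) (by positivity)]
  nlinarith [hC, mul_le_mul_of_nonneg_left hB hD]

lemma sum_mul_le_sum_div_one_add_sq_mul {ι : Type*} (s : Finset ι) {P r t : ι → ℝ} {m D : ℝ}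
    (hm : 0 < m) (hD : 0 ≤ D) (hDm : D ≤ m) (hP : ∀ j ∈ s, 0 ≤ P j) (hr : ∀ j ∈ s, m ≤ r j)
    (ht : ∀ j ∈ s, r j ^ 2 - r j * D ≤ t j) :
    (∑ j ∈ s, P j) * ((m ^ 2 - m * D) / (1 + m ^ 2)) ≤ ∑ j ∈ s, P j / (1 + r j ^ 2) * t j := by
  rw [Finset.sum_mul]
  refine Finset.sum_le_sum fun j hj => ?_
  have hPj := hP j hj
  calc P j * ((m ^ 2 - m * D) / (1 + m ^ 2))
      ≤ P j * ((r j ^ 2 - r j * D) / (1 + r j ^ 2)) :=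
        mul_le_mul_of_nonneg_left (sq_sub_mul_div_one_add_sq_le hm hD hDm (hr j hj)) hPj
    _ = P j / (1 + r j ^ 2) * (r j ^ 2 - r j * D) := by ring
    _ ≤ P j / (1 + r j ^ 2) * t j := by
        gcongr
        exact ht j hj

lemma sum_inv_one_add_sq_sq_mul_le {ι : Type*} (s : Finset ι) {r t : ι → ℝ} {m D : ℝ}
    (hm : 1 ≤ m) (hD : 0 ≤ D) (hr : ∀ j ∈ s, m ≤ r j) (ht : ∀ j ∈ s, t j ≤ r j ^ 2 + r j * D) :
    ∑ j ∈ s, ((1 + r j ^ 2) ^ 2)⁻¹ * t j ≤ s.card * ((m ^ 2 + m * D) / (1 + m ^ 2) ^ 2) := by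
  rw [← nsmul_eq_mul]
  refine Finset.sum_le_card_nsmul _ _ _ fun j hj => ?_
  calc ((1 + r j ^ 2) ^ 2)⁻¹ * t j ≤ ((1 + r j ^ 2) ^ 2)⁻¹ * (r j ^ 2 + r j * D) := by
        gcongr
        exact ht j hj
    _ ≤ _ := by
        rw [inv_mul_eq_div]
        exact sq_add_mul_div_one_add_sq_sq_le hm hD (hr j hj)

lemma sq_le_one_add_four_div_of_le {α D M q : ℝ} (hα : 1 < α) (hM : 1 ≤ M) (hDM : D ≤ M)
    (hq : 0 < q)
    (h : q * (((α * M) ^ 2 - α * M * D) / (1 + (α * M) ^ 2)) ≤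
      (1 + M ^ 2) * (((α * M) ^ 2 + α * M * D) / (1 + (α * M) ^ 2) ^ 2)) :
    α ^ 2 ≤ 1 + 4 / q := by
  have hm : 0 < α * M := by nlinarith
  have hcleared : q * ((α * M - D) * (1 + (α * M) ^ 2)) ≤ (1 + M ^ 2) * (α * M + D) := by
    have hscale : 0 ≤ (1 + (α * M) ^ 2) ^ 2 / (α * M) := by positivity
    have hm0 : α * M ≠ 0 := hm.ne'
    have hden : 1 + (α * M) ^ 2 ≠ 0 := by positivity
    calc q * ((α * M - D) * (1 + (α * M) ^ 2))
        = q * (((α * M) ^ 2 - α * M * D) / (1 + (α * M) ^ 2)) *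
            ((1 + (α * M) ^ 2) ^ 2 / (α * M)) := by field_simp
      _ ≤ (1 + M ^ 2) * (((α * M) ^ 2 + α * M * D) / (1 + (α * M) ^ 2) ^ 2) *
            ((1 + (α * M) ^ 2) ^ 2 / (α * M)) := mul_le_mul_of_nonneg_right h hscale
      _ = (1 + M ^ 2) * (α * M + D) := by field_simp
  have hpoly : (α ^ 2 - 1) * ((1 + M ^ 2) * (α * M + D)) ≤
      4 * ((α * M - D) * (1 + (α * M) ^ 2)) :=
    calc (α ^ 2 - 1) * ((1 + M ^ 2) * (α * M + D))
        ≤ (α ^ 2 - 1) * ((1 + M ^ 2) * (α * M + M)) := by gcongr; nlinarith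
      _ = M * (α - 1) * ((α + 1) ^ 2 * (1 + M ^ 2)) := by ring
      _ ≤ M * (α - 1) * (4 * (1 + α ^ 2 * M ^ 2)) := by
          refine mul_le_mul_of_nonneg_left ?_ (by nlinarith)
          have hM2 : 0 ≤ M ^ 2 - 1 := by nlinarith
          nlinarith [mul_nonneg (mul_nonneg (by linarith : 0 ≤ α - 1) hM2)
            (by linarith : 0 ≤ 3 * α + 1)]
      _ = 4 * ((α * M - M) * (1 + (α * M) ^ 2)) := by ring
      _ ≤ 4 * ((α * M - D) * (1 + (α * M) ^ 2)) := by gcongr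
  have hX : 0 < (α * M - D) * (1 + (α * M) ^ 2) := by
    have : 0 < α * M - D := by nlinarith
    positivity
  rw [← sub_le_iff_le_add', le_div_iff₀ hq]
  nlinarith [mul_le_mul_of_nonneg_left hcleared (by nlinarith : (0 : ℝ) ≤ α ^ 2 - 1)]

lemma abs_inner_add_sub_norm_sq_le [NormedAddCommGroup F] [InnerProductSpace ℝ F] (x u : F) :
    |⟪x, x + u⟫ - ‖x‖ ^ 2| ≤ ‖x‖ * ‖u‖ := by
  rw [inner_add_right, real_inner_self_eq_norm_sq, add_sub_cancel_left]
  exact abs_real_inner_le_norm x u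

lemma norm_sub_centroid_le [NormedAddCommGroup F] [NormedSpace ℝ F] {S : Finset (Fin n)}
    {Y : Fin n → F} {D : ℝ} (hD : ∀ j ∈ S, ∀ k ∈ S, ‖Y j - Y k‖ ≤ D) {j : Fin n} (hj : j ∈ S) :
    ‖Y j - centroid Y S‖ ≤ D := by
  have hcard : (0 : ℝ) < S.card := by exact_mod_cast Finset.card_pos.2 ⟨j, hj⟩
  have hdiff : Y j - centroid Y S = (S.card : ℝ)⁻¹ • ∑ k ∈ S, (Y j - Y k) := by
    rw [centroid, Finset.sum_sub_distrib, Finset.sum_const, ← Nat.cast_smul_eq_nsmul ℝ,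
      smul_sub, smul_smul, inv_mul_cancel₀ hcard.ne', one_smul]
  calc ‖Y j - centroid Y S‖ ≤ (S.card : ℝ)⁻¹ * ∑ k ∈ S, ‖Y j - Y k‖ := by
        rw [hdiff, norm_smul, Real.norm_of_nonneg (by positivity)]
        gcongr
        exact norm_sum_le _ _
    _ ≤ (S.card : ℝ)⁻¹ * (S.card * D) := by
        gcongr
        simpa using Finset.sum_le_card_nsmul S _ D fun k hk => hD j hj k hk
    _ = D := by field_simp

lemma abs_inner_sub_centroid_sub_norm_sq_le [NormedAddCommGroup F] [InnerProductSpace ℝ F]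
    {Y : Fin n → F} {i0 : Fin n} {D : ℝ} (hdiam : ∀ j k, j ≠ i0 → k ≠ i0 → ‖Y j - Y k‖ ≤ D)
    {j : Fin n} (hj : j ≠ i0) :
    |⟪Y i0 - Y j, Y i0 - centroid Y (Finset.univ.erase i0)⟫ - ‖Y i0 - Y j‖ ^ 2| ≤
      ‖Y i0 - Y j‖ * D := by
  rw [← sub_add_sub_cancel (Y i0) (Y j) (centroid Y (Finset.univ.erase i0))]
  refine (abs_inner_add_sub_norm_sq_le _ _).trans (mul_le_mul_of_nonneg_left ?_ (norm_nonneg _))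
  exact norm_sub_centroid_le (fun j hj k hk =>
    hdiam j k (Finset.ne_of_mem_erase hj) (Finset.ne_of_mem_erase hk)) (by simpa using hj)

lemma norm_sub_le_diam_image [NormedAddCommGroup F] {Y : Fin n → F} {s : Set (Fin n)}
    {j k : Fin n} (hj : j ∈ s) (hk : k ∈ s) : ‖Y j - Y k‖ ≤ Metric.diam (Y '' s) := by
  rw [← dist_eq_norm]
  exact Metric.dist_le_diam_of_mem (s.toFinite.image Y).isBounded (Set.mem_image_of_mem Y hj)
    (Set.mem_image_of_mem Y hk)

lemma IsOutlierConfig.mul_le_norm_sub [NormedAddCommGroup F] [InnerProductSpace ℝ F]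
    {Y : Fin n → F} {i0 : Fin n} {α : ℝ} (h : IsOutlierConfig Y i0 α) {j : Fin n} (hj : j ≠ i0) :
    α * max 1 (Metric.diam (Y '' {i | i ≠ i0})) ≤ ‖Y i0 - Y j‖ := by
  obtain ⟨-, v, hv, hsep⟩ := h
  calc _ ≤ ⟪Y j - Y i0, v⟫ := hsep j hj
    _ ≤ ‖Y j - Y i0‖ * ‖v‖ := real_inner_le_norm _ _
    _ = ‖Y i0 - Y j‖ := by rw [hv, mul_one, norm_sub_rev]

lemma outlierNumber_le [NormedAddCommGroup F] [InnerProductSpace ℝ F] {Y : Fin n → F}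
    {i0 : Fin n} {B : ℝ} (hB : 1 ≤ B) (h : ∀ α, IsOutlierConfig Y i0 α → 1 < α → α ≤ B) :
    outlierNumber Y i0 ≤ B :=
  Real.sSup_le (fun α hα => (le_or_gt α 1).elim (·.trans hB) (h α hα)) (zero_le_one.trans hB)

def outNormalizer [NormedAddCommGroup F] (Y : Fin n → F) : ℝ :=
  ∑ p ∈ Finset.univ.offDiag, (1 + ‖Y p.1 - Y p.2‖ ^ 2)⁻¹

lemma outNormalizer_pos [NormedAddCommGroup F] (hn : 1 < n) (Y : Fin n → F) :
    0 < outNormalizer Y := by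
  obtain ⟨i, j, hij⟩ := Fin.nontrivial_iff_two_le.2 hn
  exact Finset.sum_pos (fun p _ => by positivity) ⟨(i, j), by simpa using hij⟩

lemma le_outNormalizer [NormedAddCommGroup F] {Y : Fin n → F} {i0 : Fin n} {R : ℝ}
    (hR : ∀ j k, j ≠ i0 → k ≠ i0 → ‖Y j - Y k‖ ≤ R) :
    (n - 1) * (n - 2) / (1 + R ^ 2) ≤ outNormalizer Y := by
  have hcard : (((Finset.univ.erase i0).offDiag.card : ℕ) : ℝ) = (n - 1) * (n - 2) := by
    rw [Finset.offDiag_card, Nat.cast_sub (Nat.le_mul_self _), Nat.cast_mul, cast_card_univ_erase]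
    ring
  calc (n - 1) * (n - 2) / (1 + R ^ 2)
      = (Finset.univ.erase i0).offDiag.card • (1 + R ^ 2)⁻¹ := by
        rw [nsmul_eq_mul, hcard, div_eq_mul_inv]
    _ ≤ ∑ p ∈ (Finset.univ.erase i0).offDiag, (1 + ‖Y p.1 - Y p.2‖ ^ 2)⁻¹ := by
        refine Finset.card_nsmul_le_sum _ _ _ fun p hp => ?_
        obtain ⟨h1, h2, -⟩ := Finset.mem_offDiag.1 hp
        have hpR := hR p.1 p.2 (Finset.ne_of_mem_erase h1) (Finset.ne_of_mem_erase h2)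
        gcongr
    _ ≤ outNormalizer Y :=
        Finset.sum_le_sum_of_subset_of_nonneg
          (Finset.offDiag_mono (Finset.erase_subset _ _)) fun _ _ _ => by positivity

lemma hasDerivAt_norm_add_smul_sq [NormedAddCommGroup F] [InnerProductSpace ℝ F] (a b : F) :
    HasDerivAt (fun t : ℝ => ‖a + t • b‖ ^ 2) (2 * ⟪a, b⟫) 0 := by
  simpa using (((hasDerivAt_id (0 : ℝ)).smul_const b).const_add a).norm_sq

section

variable [NormedAddCommGroup E] {d : ℕ}

lemma nearestSet_subset (X : Fin n → E) (i : Fin n) : nearestSet X i ⊆ Finset.univ.erase i :=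
  Finset.filter_subset _ _

@[simp]
lemma condAffinity_self (X : Fin n → E) (σ : ℝ) (i : Fin n) : condAffinity X σ i i = 0 := by
  simp [condAffinity]

lemma condAffinity_nonneg (X : Fin n → E) (σ : ℝ) (i j : Fin n) : 0 ≤ condAffinity X σ i j := by
  unfold condAffinity
  split_ifs <;> positivity

lemma sum_condAffinity (hn : 1 < n) (X : Fin n → E) (σ : ℝ) (i : Fin n) :
    ∑ j, condAffinity X σ i j = 1 := by
  have hothers : (Finset.univ.erase i).Nonempty := by
    rw [← Finset.card_pos, Finset.card_erase_of_mem (Finset.mem_univ i), Finset.card_fin]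
    omega
  rw [← Finset.sum_erase _ (condAffinity_self X σ i)]
  by_cases hσ : σ = 0
  · have hnearest : (nearestSet X i).Nonempty := by
      obtain ⟨j, hj, hmin⟩ := (Finset.univ.erase i).exists_min_image (‖X i - X ·‖) hothers
      exact ⟨j, Finset.mem_filter.2 ⟨hj, hmin⟩⟩
    calc ∑ j ∈ Finset.univ.erase i, condAffinity X σ i j
        = ∑ j ∈ Finset.univ.erase i,
            if j ∈ nearestSet X i then ((nearestSet X i).card : ℝ)⁻¹ else 0 :=
          Finset.sum_congr rfl fun j hj => by
            rw [condAffinity, if_neg (Finset.ne_of_mem_erase hj), if_pos hσ]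
      _ = 1 := by
          rw [Finset.sum_ite_mem, Finset.inter_eq_right.2 (nearestSet_subset X i),
            Finset.sum_const, nsmul_eq_mul, mul_inv_cancel₀]
          exact_mod_cast hnearest.card_pos.ne'
  · rw [← div_self (Finset.sum_pos (fun l _ => Real.exp_pos _) hothers).ne', Finset.sum_div]
    refine Finset.sum_congr rfl fun j hj => ?_
    rw [condAffinity, if_neg (Finset.ne_of_mem_erase hj), if_neg hσ]

lemma inAffinity_eq (X : Fin n → E) (ρ : ℝ) (i j : Fin n) :
    inAffinity X ρ i j =
      (condAffinity X (sigmaStar X ρ j) j i + condAffinity X (sigmaStar X ρ i) i j) / (2 * n) := by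
  unfold inAffinity
  split_ifs with h
  · subst h; simp
  · rfl

lemma inAffinity_nonneg (X : Fin n → E) (ρ : ℝ) (i j : Fin n) : 0 ≤ inAffinity X ρ i j := by
  rw [inAffinity_eq]
  have := condAffinity_nonneg X (sigmaStar X ρ j) j i
  have := condAffinity_nonneg X (sigmaStar X ρ i) i j
  positivity

lemma inAffinity_comm (X : Fin n → E) (ρ : ℝ) (i j : Fin n) :
    inAffinity X ρ i j = inAffinity X ρ j i := by
  rw [inAffinity_eq, inAffinity_eq, add_comm]

lemma sum_erase_inAffinity (hn : 1 < n) (X : Fin n → E) (ρ : ℝ) (i : Fin n) :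
    ∑ j ∈ Finset.univ.erase i, inAffinity X ρ i j =
      (1 + ∑ j ∈ Finset.univ.erase i, condAffinity X (sigmaStar X ρ j) j i) / (2 * n) := by
  simp_rw [inAffinity_eq, ← Finset.sum_div, Finset.sum_add_distrib,
    Finset.sum_erase _ (condAffinity_self X _ i), sum_condAffinity hn, add_comm]

lemma sum_erase_inAffinity_pos (hn : 1 < n) (X : Fin n → E) (ρ : ℝ) (i : Fin n) :
    0 < ∑ j ∈ Finset.univ.erase i, inAffinity X ρ i j := by
  have := Finset.sum_nonneg fun j (_ : j ∈ Finset.univ.erase i) =>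
    condAffinity_nonneg X (sigmaStar X ρ j) j i
  rw [sum_erase_inAffinity hn]
  positivity

lemma four_div_sum_erase_inAffinity_mul (hn : 2 < n) (X : Fin n → E) (ρ : ℝ) (i : Fin n) :
    4 / ((∑ j ∈ Finset.univ.erase i, inAffinity X ρ i j) * (n - 2)) =
      (1 + 2 / ((n : ℝ) - 2)) *
        (8 / (1 + ∑ j ∈ Finset.univ.erase i, condAffinity X (sigmaStar X ρ j) j i)) := by
  have hn2 : (n : ℝ) - 2 ≠ 0 := by
    have : (2 : ℝ) < n := by exact_mod_cast hn
    linarith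
  have := Finset.sum_nonneg fun j (_ : j ∈ Finset.univ.erase i) =>
    condAffinity_nonneg X (sigmaStar X ρ j) j i
  rw [sum_erase_inAffinity (by omega)]
  field_simp
  ring

lemma sum_offDiag_inAffinity (hn : 1 < n) (X : Fin n → E) (ρ : ℝ) :
    ∑ p ∈ Finset.univ.offDiag, inAffinity X ρ p.1 p.2 = 1 := by
  have hn0 : (n : ℝ) ≠ 0 := by positivity
  rw [sum_offDiag_eq_sum_sum _ _ fun i => by simp [inAffinity_eq]]
  simp_rw [inAffinity_eq, ← Finset.sum_div, Finset.sum_add_distrib]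
  rw [Finset.sum_comm (f := fun i j => condAffinity X (sigmaStar X ρ j) j i)]
  simp [sum_condAffinity hn]
  field_simp
  ring

lemma tsneLoss_eq (hn : 1 < n) (X : Fin n → E) (ρ : ℝ) (Z : Fin n → EuclideanSpace ℝ (Fin d)) :
    tsneLoss X ρ Z =
      ∑ p ∈ Finset.univ.offDiag, inAffinity X ρ p.1 p.2 * Real.log (inAffinity X ρ p.1 p.2) +
        (∑ p ∈ Finset.univ.offDiag,
          inAffinity X ρ p.1 p.2 * Real.log (1 + ‖Z p.1 - Z p.2‖ ^ 2) +
        Real.log (outNormalizer Z)) := by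
  have hS := outNormalizer_pos hn Z
  have hlogS : Real.log (outNormalizer Z) =
      ∑ p ∈ Finset.univ.offDiag, inAffinity X ρ p.1 p.2 * Real.log (outNormalizer Z) := by
    rw [← Finset.sum_mul, sum_offDiag_inAffinity hn X ρ, one_mul]
  rw [hlogS, ← Finset.sum_add_distrib, ← Finset.sum_add_distrib, tsneLoss]
  refine Finset.sum_congr rfl fun p hp => ?_
  have hQ : outAffinity Z p.1 p.2 = (1 + ‖Z p.1 - Z p.2‖ ^ 2)⁻¹ / outNormalizer Z :=
    if_neg (Finset.mem_offDiag.1 hp).2.2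
  rcases eq_or_ne (inAffinity X ρ p.1 p.2) 0 with hP | hP
  · simp [hP]
  · rw [hQ, div_div_eq_mul_div, div_inv_eq_mul, Real.log_mul (mul_ne_zero hP hS.ne')
      (by positivity), Real.log_mul hP hS.ne']
    ring

lemma differentiableAt_tsneLoss (hn : 1 < n) (X : Fin n → E) (ρ : ℝ)
    (Z : Fin n → EuclideanSpace ℝ (Fin d)) : DifferentiableAt ℝ (tsneLoss X ρ) Z := by
  have hsq (p : Fin n × Fin n) :
      Differentiable ℝ fun W : Fin n → EuclideanSpace ℝ (Fin d) => 1 + ‖W p.1 - W p.2‖ ^ 2 :=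
    (((differentiable_apply p.1).sub (differentiable_apply p.2)).norm_sq ℝ).const_add 1
  rw [funext (tsneLoss_eq hn X ρ)]
  refine (differentiableAt_const _).add <| (DifferentiableAt.fun_sum fun p _ =>
    ((hsq p Z).log (by positivity)).const_mul _).add <| DifferentiableAt.log ?_
      (outNormalizer_pos hn Z).ne'
  exact DifferentiableAt.fun_sum fun p _ => (hsq p Z).inv (by positivity)

lemma hasDerivAt_tsneLoss_add_smul (hn : 1 < n) (X : Fin n → E) (ρ : ℝ)
    (Y w : Fin n → EuclideanSpace ℝ (Fin d)) :
    HasDerivAt (fun t : ℝ => tsneLoss X ρ (Y + t • w))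
      (2 * ∑ p ∈ Finset.univ.offDiag, inAffinity X ρ p.1 p.2 / (1 + ‖Y p.1 - Y p.2‖ ^ 2) *
          ⟪Y p.1 - Y p.2, w p.1 - w p.2⟫ -
        2 * (∑ p ∈ Finset.univ.offDiag, ((1 + ‖Y p.1 - Y p.2‖ ^ 2) ^ 2)⁻¹ *
          ⟪Y p.1 - Y p.2, w p.1 - w p.2⟫) / outNormalizer Y) 0 := by
  set a : Fin n × Fin n → EuclideanSpace ℝ (Fin d) := fun p => Y p.1 - Y p.2
  set b : Fin n × Fin n → EuclideanSpace ℝ (Fin d) := fun p => w p.1 - w p.2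
  have hloss : (fun t : ℝ => tsneLoss X ρ (Y + t • w)) = fun t =>
      ∑ p ∈ Finset.univ.offDiag, inAffinity X ρ p.1 p.2 * Real.log (inAffinity X ρ p.1 p.2) +
        (∑ p ∈ Finset.univ.offDiag,
          inAffinity X ρ p.1 p.2 * Real.log (1 + ‖a p + t • b p‖ ^ 2) +
        Real.log (∑ p ∈ Finset.univ.offDiag, (1 + ‖a p + t • b p‖ ^ 2)⁻¹)) := by
    funext t
    have hdiff (p : Fin n × Fin n) : (Y + t • w) p.1 - (Y + t • w) p.2 = a p + t • b p := by
      simp only [a, b, Pi.add_apply, Pi.smul_apply]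
      module
    simp only [tsneLoss_eq hn X ρ, outNormalizer, hdiff]
  have hsq (p : Fin n × Fin n) :
      HasDerivAt (fun t : ℝ => 1 + ‖a p + t • b p‖ ^ 2) (2 * ⟪a p, b p⟫) 0 :=
    (hasDerivAt_norm_add_smul_sq (a p) (b p)).const_add 1
  have hattr : HasDerivAt
      (fun t : ℝ => ∑ p ∈ Finset.univ.offDiag,
        inAffinity X ρ p.1 p.2 * Real.log (1 + ‖a p + t • b p‖ ^ 2))
      (2 * ∑ p ∈ Finset.univ.offDiag, inAffinity X ρ p.1 p.2 / (1 + ‖a p‖ ^ 2) * ⟪a p, b p⟫) 0 := by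
    rw [Finset.mul_sum]
    exact HasDerivAt.fun_sum fun p _ => (((hsq p).log (by positivity)).const_mul _).congr_deriv
      (by simp only [zero_smul, add_zero]; ring)
  have hrep : HasDerivAt
      (fun t : ℝ => ∑ p ∈ Finset.univ.offDiag, (1 + ‖a p + t • b p‖ ^ 2)⁻¹)
      (-2 * ∑ p ∈ Finset.univ.offDiag, ((1 + ‖a p‖ ^ 2) ^ 2)⁻¹ * ⟪a p, b p⟫) 0 := by
    rw [Finset.mul_sum]
    exact HasDerivAt.fun_sum fun p _ => ((hsq p).inv (by positivity)).congr_deriv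
      (by simp only [zero_smul, add_zero]; ring)
  have hlog := hrep.log (by simpa [outNormalizer] using (outNormalizer_pos hn Y).ne')
  rw [hloss]
  refine ((hattr.add hlog).const_add _).congr_deriv ?_
  simp only [zero_smul, add_zero, outNormalizer, a]
  ring

lemma sum_inner_eq_of_mem_TSNE (hn : 1 < n) {X : Fin n → E} {ρ : ℝ}
    {Y : Fin n → EuclideanSpace ℝ (Fin d)} (hY : Y ∈ TSNE d ρ X)
    (w : Fin n → EuclideanSpace ℝ (Fin d)) :
    ∑ p ∈ Finset.univ.offDiag, inAffinity X ρ p.1 p.2 / (1 + ‖Y p.1 - Y p.2‖ ^ 2) *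
        ⟪Y p.1 - Y p.2, w p.1 - w p.2⟫ =
      (∑ p ∈ Finset.univ.offDiag, ((1 + ‖Y p.1 - Y p.2‖ ^ 2) ^ 2)⁻¹ *
        ⟪Y p.1 - Y p.2, w p.1 - w p.2⟫) / outNormalizer Y := by
  have hcrit := (differentiableAt_tsneLoss hn X ρ Y).hasFDerivAt
  rw [show fderiv ℝ (tsneLoss X ρ) Y = 0 from hY, ← add_zero Y, ← zero_smul ℝ w] at hcrit
  have hline : HasDerivAt (fun t : ℝ => Y + t • w) w 0 := by
    simpa using ((hasDerivAt_id (0 : ℝ)).smul_const w).const_add Y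
  have hzero : HasDerivAt (fun t : ℝ => tsneLoss X ρ (Y + t • w)) 0 0 := by
    have := hcrit.comp_hasDerivAt (0 : ℝ) hline
    rwa [zero_apply] at this
  have := hzero.unique (hasDerivAt_tsneLoss_add_smul hn X ρ Y w)
  rw [mul_div_assoc] at this
  linarith

lemma sum_erase_inner_eq_of_mem_TSNE (hn : 1 < n)
    {X : Fin n → E} {ρ : ℝ} {Y : Fin n → EuclideanSpace ℝ (Fin d)} (hY : Y ∈ TSNE d ρ X)
    (i0 : Fin n) (z : EuclideanSpace ℝ (Fin d)) :
    ∑ j ∈ Finset.univ.erase i0, inAffinity X ρ i0 j / (1 + ‖Y i0 - Y j‖ ^ 2) * ⟪Y i0 - Y j, z⟫ =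
      (∑ j ∈ Finset.univ.erase i0, ((1 + ‖Y i0 - Y j‖ ^ 2) ^ 2)⁻¹ * ⟪Y i0 - Y j, z⟫) /
        outNormalizer Y := by
  have h := sum_inner_eq_of_mem_TSNE hn hY (Pi.single i0 z)
  rw [sum_offDiag_mul_inner_sub_single (fun i j => inAffinity X ρ i j / (1 + ‖Y i - Y j‖ ^ 2))
      (fun i j => by rw [inAffinity_comm, norm_sub_rev]),
    sum_offDiag_mul_inner_sub_single (fun i j => ((1 + ‖Y i - Y j‖ ^ 2) ^ 2)⁻¹)
      (fun i j => by rw [norm_sub_rev]), mul_div_assoc] at h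
  linarith

lemma sum_erase_inAffinity_mul_le_of_mem_TSNE (hn : 2 < n)
    {X : Fin n → E} {ρ : ℝ} {Y : Fin n → EuclideanSpace ℝ (Fin d)} (hY : Y ∈ TSNE d ρ X)
    (i0 : Fin n) {m D M : ℝ} (hm : 1 ≤ m) (hD : 0 ≤ D) (hDm : D ≤ m) (hDM : D ≤ M)
    (hsep : ∀ j, j ≠ i0 → m ≤ ‖Y i0 - Y j‖)
    (hdiam : ∀ j k, j ≠ i0 → k ≠ i0 → ‖Y j - Y k‖ ≤ D) :
    (∑ j ∈ Finset.univ.erase i0, inAffinity X ρ i0 j) * (n - 2) *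
        ((m ^ 2 - m * D) / (1 + m ^ 2)) ≤ (1 + M ^ 2) * ((m ^ 2 + m * D) / (1 + m ^ 2) ^ 2) := by
  have hnR : (2 : ℝ) < n := by exact_mod_cast hn
  set z := Y i0 - centroid Y (Finset.univ.erase i0)
  have hsep' (j) (hj : j ∈ Finset.univ.erase i0) := hsep j (Finset.ne_of_mem_erase hj)
  have hclose (j) (hj : j ∈ Finset.univ.erase i0) :=
    abs_le.1 (abs_inner_sub_centroid_sub_norm_sq_le hdiam (Finset.ne_of_mem_erase hj))
  have hattr := sum_mul_le_sum_div_one_add_sq_mul (Finset.univ.erase i0)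
    (r := fun j => ‖Y i0 - Y j‖) (t := fun j => ⟪Y i0 - Y j, z⟫) (by linarith) hD hDm
    (fun j _ => inAffinity_nonneg X ρ i0 j) hsep' fun j hj => by linarith [(hclose j hj).1]
  have hrep := sum_inv_one_add_sq_sq_mul_le (Finset.univ.erase i0)
    (r := fun j => ‖Y i0 - Y j‖) (t := fun j => ⟪Y i0 - Y j, z⟫) hm hD hsep'
    fun j hj => by linarith [(hclose j hj).2]
  have hrep_nonneg :
      0 ≤ ∑ j ∈ Finset.univ.erase i0, ((1 + ‖Y i0 - Y j‖ ^ 2) ^ 2)⁻¹ * ⟪Y i0 - Y j, z⟫ := by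
    refine Finset.sum_nonneg fun j hj => mul_nonneg (by positivity) ?_
    nlinarith [(hclose j hj).1, hsep' j hj]
  have hnorm_pos : 0 < (n - 1) * (n - 2) / (1 + M ^ 2) := by
    have : 0 < ((n : ℝ) - 1) * (n - 2) := by nlinarith
    positivity
  rw [sum_erase_inner_eq_of_mem_TSNE (by omega) hY i0 z] at hattr
  have key := hattr.trans ((div_le_div_of_nonneg_left hrep_nonneg hnorm_pos
    (le_outNormalizer fun j k hj hk => (hdiam j k hj hk).trans hDM)).trans
      (div_le_div_of_nonneg_right hrep hnorm_pos.le))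
  rw [cast_card_univ_erase, div_div_eq_mul_div, le_div_iff₀ (by nlinarith)] at key
  nlinarith [key]

end

/-- Theorem `outlier_abs`: a stationary t-SNE embedding cannot depict an
extreme outlier; its outlier number is bounded in terms of the input affinities. -/
theorem outlier_bound (n d : ℕ) (hn : 2 < n)
    (ρ : ℝ)
    (Y : Fin n → EuclideanSpace ℝ (Fin d))
    (X : Fin n → EuclideanSpace ℝ (Fin (n - 1))) (hYX : Y ∈ TSNE d ρ X) :
    outlierNumber Y ⟨0, by omega⟩ ≤
      Real.sqrt (1 + (1 + 2 / ((n : ℝ) - 2)) *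
        (8 / (1 + ∑ i ∈ Finset.univ.erase (⟨0, by omega⟩ : Fin n),
          condAffinity X (sigmaStar X ρ i) i ⟨0, by omega⟩))) := by
  set i0 : Fin n := ⟨0, by omega⟩
  have hnR : (2 : ℝ) < n := by exact_mod_cast hn
  have hq : 0 < (∑ j ∈ Finset.univ.erase i0, inAffinity X ρ i0 j) * (n - 2) :=
    mul_pos (sum_erase_inAffinity_pos (by omega) X ρ i0) (by linarith)
  rw [← four_div_sum_erase_inAffinity_mul hn X ρ i0]
  refine outlierNumber_le (Real.one_le_sqrt.2 (le_add_of_nonneg_right (by positivity)))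
    fun α hα hα1 => ?_
  set D := Metric.diam (Y '' {i | i ≠ i0})
  have hD : 0 ≤ D := Metric.diam_nonneg
  have hM : 1 ≤ max 1 D := le_max_left 1 D
  have hDM : D ≤ max 1 D := le_max_right 1 D
  refine Real.le_sqrt_of_sq_le (sq_le_one_add_four_div_of_le hα1 hM hDM hq ?_)
  exact sum_erase_inAffinity_mul_le_of_mem_TSNE hn hYX i0 (by nlinarith) hD (by nlinarith) hDM
    (fun j hj => hα.mul_le_norm_sub hj) fun j k hj hk => norm_sub_le_diam_image hj hk

end TSNEPaper
end
end

section
/- Fix any n ≥ 1. For every n-point dataset X = {x_1,…,x_n} ⊂ ℝ^{n−1} and every constant C ≥ 0, there exists an n-point dataset X_{+C} = {x'_1,…,x'_n} ⊂ ℝ^{n−1} such that ‖x'_i − x'_j‖² = ‖x_i − x_j‖² + C for all i ≠ j. -/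
open scoped BigOperators RealInnerProductSpace
noncomputable section

open WithLp

theorem Orthonormal.norm_sub_sq_eq_two {ι F : Type*} [NormedAddCommGroup F]
    [InnerProductSpace ℝ F] {v : ι → F} (hv : Orthonormal ℝ v) {i j : ι} (hij : i ≠ j) :
    ‖v i - v j‖ ^ 2 = 2 := by
  rw [norm_sub_sq_real, hv.1 i, hv.1 j, hv.2 hij]
  norm_num

theorem Orthonormal.norm_sub_sq_toLp_prod_smul {ι E F : Type*} [NormedAddCommGroup E]
    [InnerProductSpace ℝ E] [NormedAddCommGroup F] [InnerProductSpace ℝ F] {v : ι → F}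
    (hv : Orthonormal ℝ v) (x : ι → E) (c : ℝ) {i j : ι} (hij : i ≠ j) :
    ‖toLp 2 (x i, c • v i) - toLp 2 (x j, c • v j)‖ ^ 2 = ‖x i - x j‖ ^ 2 + 2 * c ^ 2 := by
  rw [← toLp_sub, Prod.mk_sub_mk, prod_norm_sq_eq_of_L2, toLp_fst, toLp_snd, ← smul_sub,
    norm_smul, mul_pow, hv.norm_sub_sq_eq_two hij, Real.norm_eq_abs, sq_abs, mul_comm]

theorem exists_linearIsometry_euclideanSpace_of_finrank_le {V : Type*} [NormedAddCommGroup V]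
    [InnerProductSpace ℝ V] [FiniteDimensional ℝ V] {m : ℕ} (h : Module.finrank ℝ V ≤ m) :
    Nonempty (V →ₗᵢ[ℝ] EuclideanSpace ℝ (Fin m)) := by
  let b := (stdOrthonormalBasis ℝ V).toBasis
  let e : Fin (Module.finrank ℝ V) → EuclideanSpace ℝ (Fin m) :=
    fun i => EuclideanSpace.single (Fin.castLE h i) 1
  have he : Orthonormal ℝ e :=
    EuclideanSpace.orthonormal_single.comp _ (Fin.castLE_injective h)
  have hb : Orthonormal ℝ b := by
    simp [b, (stdOrthonormalBasis ℝ V).orthonormal]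
  refine ⟨(b.constr ℝ e).isometryOfOrthonormal hb ?_⟩
  convert he
  exact funext (b.constr_basis ℝ e)

theorem exists_euclideanSpace_points_norm_sub_eq {G : Type*} [NormedAddCommGroup G]
    [InnerProductSpace ℝ G] : ∀ {n : ℕ} (w : Fin n → G),
    ∃ X : Fin n → EuclideanSpace ℝ (Fin (n - 1)), ∀ i j, ‖X i - X j‖ = ‖w i - w j‖
  | 0, _ => ⟨Fin.elim0, fun i => i.elim0⟩
  | k + 1, w => by
    let V := Submodule.span ℝ (Set.range fun i : Fin k => w i.succ - w 0)
    have : FiniteDimensional ℝ V := .span_of_finite ℝ (Set.finite_range _)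
    have hV : Module.finrank ℝ V ≤ k := (finrank_range_le_card _).trans_eq (Fintype.card_fin k)
    obtain ⟨L⟩ := exists_linearIsometry_euclideanSpace_of_finrank_le hV
    have hmem : ∀ i, w i - w 0 ∈ V := Fin.cases (by simp) fun i =>
      Submodule.subset_span ⟨i, rfl⟩
    refine ⟨fun i => L ⟨w i - w 0, hmem i⟩, fun i j => ?_⟩
    rw [← map_sub, L.norm_map, Submodule.coe_norm, Submodule.coe_sub,
      sub_sub_sub_cancel_right]

namespace TSNEPaper

theorem plusC_exists_general (n : ℕ)
    (X : Fin n → EuclideanSpace ℝ (Fin (n - 1))) (C : ℝ) (hC : 0 ≤ C) :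
    ∃ X' : Fin n → EuclideanSpace ℝ (Fin (n - 1)),
      ∀ i j : Fin n, i ≠ j → ‖X' i - X' j‖ ^ 2 = ‖X i - X j‖ ^ 2 + C := by
  set c := √(C / 2)
  have hc : 2 * c ^ 2 = C := by rw [Real.sq_sqrt (by linarith)]; ring
  let lift : Fin n → WithLp 2 (EuclideanSpace ℝ (Fin (n - 1)) × EuclideanSpace ℝ (Fin n)) :=
    fun i => toLp 2 (X i, c • EuclideanSpace.single i 1)
  obtain ⟨X', hX'⟩ := exists_euclideanSpace_points_norm_sub_eq lift
  refine ⟨X', fun i j hij => ?_⟩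
  rw [hX', ← hc]
  exact (EuclideanSpace.orthonormal_single (𝕜 := ℝ) (ι := Fin n)).norm_sub_sq_toLp_prod_smul
    X c hij

/-- Lemma `X+C_exists`: for any dataset of `n` points in `ℝ^{n-1}` and any
`C ≥ 0` there is a dataset in `ℝ^{n-1}` whose squared interpoint distances are the original
ones plus `C`. -/
theorem plusC_exists (n : ℕ) (hn : 1 ≤ n)
    (X : Fin n → EuclideanSpace ℝ (Fin (n - 1))) (C : ℝ) (hC : 0 ≤ C) :
    ∃ X' : Fin n → EuclideanSpace ℝ (Fin (n - 1)),
      ∀ i j : Fin n, i ≠ j → ‖X' i - X' j‖ ^ 2 = ‖X i - X j‖ ^ 2 + C :=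
  plusC_exists_general n X C hC

end TSNEPaper
end
end

section
/- Fix any n > 2. For every n-point dataset X ⊂ ℝ^{n−1}, every perplexity ρ ∈ (1, n−1), and every C ≥ 0, letting X_{+C} ⊂ ℝ^{n−1} be any n-point dataset with ‖(X_{+C})_i − (X_{+C})_j‖² = ‖x_i − x_j‖² + C for all i ≠ j, one has TSNE_ρ(X) = TSNE_ρ(X_{+C}): the set of stationary t-SNE outputs is invariant under adding a constant to all squared interpoint distances of the input. -/
/-!
The input enters t-SNE only through the conditional affinities `P_{·|i}(X;σ)`. For `σ > 0`
these are Gaussian weights `exp (-‖x_i - x_j‖² / (2σ²))` normalised over `j ≠ i`, and adding `C`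
to every squared distance multiplies all of them by `exp (-C / (2σ²))`, which cancels; for
`σ = 0` they depend only on the order of the distances from `x_i`, which the shift preserves.
Hence the calibrated bandwidths, `P(X)`, the loss and its critical points are unchanged.
-/


open scoped BigOperators RealInnerProductSpace
noncomputable section

namespace TSNEPaper

variable {n k : ℕ} {E F : Type*}

section AdditiveShift

variable [NormedAddCommGroup E] [NormedAddCommGroup F]
  {X : Fin n → E} {X' : Fin n → F} {i : Fin n} {C : ℝ}

theorem nearestSet_eq_of_sq_dist_add_const
    (h : ∀ j, j ≠ i → ‖X' i - X' j‖ ^ 2 = ‖X i - X j‖ ^ 2 + C) :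
    nearestSet X' i = nearestSet X i := by
  have hle : ∀ j l, j ≠ i → l ≠ i →
      (‖X' i - X' j‖ ≤ ‖X' i - X' l‖ ↔ ‖X i - X j‖ ≤ ‖X i - X l‖) := by
    intro j l hj hl
    rw [← sq_le_sq₀ (norm_nonneg _) (norm_nonneg _), ← sq_le_sq₀ (norm_nonneg _) (norm_nonneg _),
      h j hj, h l hl, add_le_add_iff_right]
  refine Finset.filter_congr fun j hj => forall₂_congr fun l hl => ?_
  exact hle j l (Finset.ne_of_mem_erase hj) (Finset.ne_of_mem_erase hl)

theorem condAffinity_eq_of_sq_dist_add_const (σ : ℝ)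
    (h : ∀ j, j ≠ i → ‖X' i - X' j‖ ^ 2 = ‖X i - X j‖ ^ 2 + C) :
    condAffinity X' σ i = condAffinity X σ i := by
  funext j
  unfold condAffinity
  rw [nearestSet_eq_of_sq_dist_add_const h]
  refine ite_congr rfl (fun _ => rfl) fun hji => ite_congr rfl (fun _ => rfl) fun _ => ?_
  have hweight : ∀ l, l ≠ i → Real.exp (-‖X' i - X' l‖ ^ 2 / (2 * σ ^ 2)) =
      Real.exp (-C / (2 * σ ^ 2)) * Real.exp (-‖X i - X l‖ ^ 2 / (2 * σ ^ 2)) := by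
    intro l hl
    rw [← Real.exp_add, h l hl]
    ring_nf
  rw [hweight j hji, Finset.sum_congr rfl fun l hl => hweight l (Finset.ne_of_mem_erase hl),
    ← Finset.mul_sum, mul_div_mul_left _ _ (Real.exp_ne_zero _)]

theorem inAffinity_congr (h : ∀ σ i, condAffinity X' σ i = condAffinity X σ i)
    (ρ : ℝ) : inAffinity X' ρ = inAffinity X ρ := by
  have hsigma : sigmaStar X' ρ = sigmaStar X ρ := by
    funext i
    unfold sigmaStar
    congr 1
    funext σ
    simp only [IsCalibrated, h]
  funext i j
  simp only [inAffinity, hsigma, h]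

end AdditiveShift

theorem tSNE_additive_invariance_general (n d : ℕ)
    (X XC : Fin n → EuclideanSpace ℝ (Fin (n - 1)))
    (ρ C : ℝ)
    (hdist : ∀ i j : Fin n, i ≠ j → ‖XC i - XC j‖ ^ 2 = ‖X i - X j‖ ^ 2 + C) :
    TSNE d ρ X = TSNE d ρ XC := by
  have hcond : ∀ σ i, condAffinity XC σ i = condAffinity X σ i := fun σ i =>
    condAffinity_eq_of_sq_dist_add_const σ fun j hj => hdist i j hj.symm
  have hloss : tsneLoss (d := d) XC ρ = tsneLoss X ρ := by
    funext Y
    simp only [tsneLoss, inAffinity_congr hcond]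
  simp only [TSNE, hloss]

/-- Lemma `tSNE_additive_invariance`: the set of stationary t-SNE outputs is
invariant under adding a constant to all squared interpoint distances of the input. -/
theorem tSNE_additive_invariance (n d : ℕ) (hn : 2 < n) (hd : 1 ≤ d)
    (X XC : Fin n → EuclideanSpace ℝ (Fin (n - 1)))
    (ρ C : ℝ) (hρ : 1 < ρ) (hρ' : ρ < (n : ℝ) - 1) (hC : 0 ≤ C)
    (hdist : ∀ i j : Fin n, i ≠ j → ‖XC i - XC j‖ ^ 2 = ‖X i - X j‖ ^ 2 + C) :
    TSNE d ρ X = TSNE d ρ XC :=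
  tSNE_additive_invariance_general n d X XC ρ C hdist

end TSNEPaper
end
end

section
/- Fix any n > 2. For every n-point dataset X ⊂ ℝ^{n−1}, every perplexity ρ ∈ (1, n−1), and every scaling constant C > 0, TSNE_ρ(X) = TSNE_ρ(C·X), where C·X = {C·x_1,…,C·x_n}: the set of stationary t-SNE outputs is invariant under multiplicative scaling of the input. -/
/-!
Scaling the input by `C > 0` gives `P_{·|i}(C·X; C·σ) = P_{·|i}(X; σ)`, so the calibrated
bandwidths of `C·X` are `C` times those of `X`. Since `σ_i^*` is picked by `Classical.epsilon`,
what remains is that a calibrated bandwidth exists and that all of them give the same affinities.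

For `σ > 0`, `P_{·|i}(X; σ)` is the Gibbs distribution of the squared distances `‖x_i - x_j‖²`
at inverse temperature `β = 1/(2σ²)`; its entropy has `β`-derivative `-β · Var_β`. Hence the
entropy is continuous and nondecreasing in `σ ∈ [0, ∞)` (at `σ = 0` it is the zero-temperature
limit, uniform on the nearest neighbours), strictly increasing unless all distances from `x_i`
agree (and then the affinities do not depend on `σ` at all), and it tends to
`log₂ (n - 1) > log₂ ρ` as `σ → ∞`. The intermediate value theorem gives a calibrated bandwidth,
and strict monotonicity makes it unique.
-/

open scoped BigOperators RealInnerProductSpace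
noncomputable section

open Real Filter Topology Set

lemma StrictMonoOn.eq_of_isMinOn_abs_sub {f : ℝ → ℝ} {s : Set ℝ} [s.OrdConnected]
    (hf : StrictMonoOn f s) {t a b : ℝ} (ha : a ∈ s) (hb : b ∈ s)
    (ha' : IsMinOn (fun x => |f x - t|) s a) (hb' : IsMinOn (fun x => |f x - t|) s b) :
    a = b := by
  wlog hlt : a < b generalizing a b
  · rcases (not_lt.1 hlt).eq_or_lt with h | h
    · exact h.symm
    · exact (this hb ha hb' ha' h).symm
  -- at a point strictly between, `|f - t|` is below its value at `a` or at `b`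
  obtain ⟨u, hau, hub⟩ := exists_between hlt
  have hu : u ∈ s := Set.OrdConnected.out ‹_› ha hb ⟨hau.le, hub.le⟩
  have hfau := hf ha hu hau
  have hfub := hf hu hb hub
  have hmina : |f a - t| ≤ |f u - t| := isMinOn_iff.1 ha' u hu
  have hminb : |f b - t| ≤ |f u - t| := isMinOn_iff.1 hb' u hu
  rcases le_or_gt t (f u) with h | h
  · rw [abs_of_nonneg (sub_nonneg.2 h)] at hminb
    linarith [le_abs_self (f b - t)]
  · rw [abs_of_neg (sub_neg.2 h)] at hmina
    linarith [neg_abs_le (f a - t)]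

lemma MonotoneOn.exists_isMinOn_abs_sub {f : ℝ → ℝ} {a b t : ℝ} (hf : MonotoneOn f (Ici a))
    (hc : ContinuousOn f (Ici a)) (hab : a ≤ b) (hb : t ≤ f b) :
    ∃ x ∈ Ici a, IsMinOn (fun x => |f x - t|) (Ici a) x := by
  by_cases ht : t ≤ f a
  · refine ⟨a, self_mem_Ici, isMinOn_iff.2 fun x hx => ?_⟩
    have := hf self_mem_Ici hx hx
    rw [abs_of_nonneg (by linarith), abs_of_nonneg (by linarith)]
    linarith
  · obtain ⟨x, hx, hfx⟩ :=
      intermediate_value_Icc hab (hc.mono Icc_subset_Ici_self) ⟨(not_le.1 ht).le, hb⟩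
    exact ⟨x, hx.1, isMinOn_iff.2 fun y _ => by simp [hfx]⟩

lemma tendsto_exp_neg_mul_atTop {d : ℝ} (hd : 0 ≤ d) :
    Tendsto (fun β => exp (-(d * β))) atTop (𝓝 (if d = 0 then 1 else 0)) := by
  split_ifs with h
  · simp only [h, zero_mul, neg_zero, exp_zero, tendsto_const_nhds]
  · exact tendsto_exp_neg_atTop_nhds_zero.comp (tendsto_id.const_mul_atTop (hd.lt_of_ne' h))

section Gibbs

variable {ι : Type*} (S : Finset ι) (c : ι → ℝ)

def gibbsMoment (k : ℕ) (β : ℝ) : ℝ := ∑ j ∈ S, c j ^ k * exp (-(c j * β))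

def gibbs (β : ℝ) (j : ι) : ℝ := exp (-(c j * β)) / gibbsMoment S c 0 β

def gibbsEntropy (β : ℝ) : ℝ :=
  β * gibbsMoment S c 1 β / gibbsMoment S c 0 β + log (gibbsMoment S c 0 β)

def gibbsVariance (β : ℝ) : ℝ :=
  gibbsMoment S c 2 β / gibbsMoment S c 0 β - (gibbsMoment S c 1 β / gibbsMoment S c 0 β) ^ 2

variable {S}

lemma gibbsMoment_zero_pos (hS : S.Nonempty) (β : ℝ) : 0 < gibbsMoment S c 0 β :=
  Finset.sum_pos (fun j _ => by simpa using exp_pos _) hS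

variable (S) in
lemma hasDerivAt_gibbsMoment (k : ℕ) (β : ℝ) :
    HasDerivAt (gibbsMoment S c k) (-gibbsMoment S c (k + 1) β) β := by
  have hterm (j : ι) : HasDerivAt (fun β => c j ^ k * exp (-(c j * β)))
      (-(c j ^ (k + 1) * exp (-(c j * β)))) β := by
    refine ((((hasDerivAt_id' β).const_mul (c j)).fun_neg.exp).const_mul (c j ^ k)).congr_deriv ?_
    ring
  have h := HasDerivAt.fun_sum (u := S) fun j _ => hterm j
  rw [Finset.sum_neg_distrib] at h
  exact h

lemma hasDerivAt_gibbsEntropy (hS : S.Nonempty) (β : ℝ) :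
    HasDerivAt (gibbsEntropy S c) (-(β * gibbsVariance S c β)) β := by
  have hZ := (gibbsMoment_zero_pos c hS β).ne'
  have hW := hasDerivAt_gibbsMoment S c 1 β
  have hZ' := hasDerivAt_gibbsMoment S c 0 β
  refine ((((hasDerivAt_id' β).fun_mul hW).fun_div hZ' hZ).fun_add (hZ'.log hZ)).congr_deriv ?_
  rw [gibbsVariance]
  field_simp
  ring

lemma gibbsVariance_eq (hS : S.Nonempty) (β : ℝ) :
    gibbsVariance S c β =
      ∑ j ∈ S, (c j - gibbsMoment S c 1 β / gibbsMoment S c 0 β) ^ 2 * gibbs S c β j := by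
  have hZ := (gibbsMoment_zero_pos c hS β).ne'
  set μ := gibbsMoment S c 1 β / gibbsMoment S c 0 β
  have hexpand (j : ι) : (c j - μ) ^ 2 * gibbs S c β j =
      (c j ^ 2 * exp (-(c j * β)) - 2 * μ * (c j ^ 1 * exp (-(c j * β)))
        + μ ^ 2 * (c j ^ 0 * exp (-(c j * β)))) / gibbsMoment S c 0 β := by
    simp only [gibbs]; ring
  rw [Finset.sum_congr rfl fun j _ => hexpand j, ← Finset.sum_div, Finset.sum_add_distrib,
    Finset.sum_sub_distrib, ← Finset.mul_sum, ← Finset.mul_sum, ← gibbsMoment, ← gibbsMoment,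
    ← gibbsMoment, gibbsVariance]
  simp only [μ]
  field_simp
  ring

lemma gibbsVariance_nonneg (hS : S.Nonempty) (β : ℝ) : 0 ≤ gibbsVariance S c β := by
  rw [gibbsVariance_eq c hS]
  exact Finset.sum_nonneg fun j _ => mul_nonneg (sq_nonneg _)
    (div_nonneg (exp_pos _).le (gibbsMoment_zero_pos c hS β).le)

lemma gibbsVariance_pos {a b : ι} (ha : a ∈ S) (hb : b ∈ S) (hab : c a ≠ c b) (β : ℝ) :
    0 < gibbsVariance S c β := by
  have hS : S.Nonempty := ⟨a, ha⟩
  rw [gibbsVariance_eq c hS]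
  set μ := gibbsMoment S c 1 β / gibbsMoment S c 0 β
  obtain ⟨j, hj, hjμ⟩ : ∃ j ∈ S, c j ≠ μ := by
    by_contra! h
    exact hab ((h a ha).trans (h b hb).symm)
  have hZ := gibbsMoment_zero_pos c hS β
  refine Finset.sum_pos' (fun l _ => by unfold gibbs; positivity) ⟨j, hj, ?_⟩
  have : c j - μ ≠ 0 := sub_ne_zero.2 hjμ
  unfold gibbs; positivity

lemma sum_negMulLog_gibbs (hS : S.Nonempty) (β : ℝ) :
    ∑ j ∈ S, negMulLog (gibbs S c β j) = gibbsEntropy S c β := by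
  have hZ := (gibbsMoment_zero_pos c hS β).ne'
  have hterm (j : ι) : negMulLog (gibbs S c β j) =
      (β / gibbsMoment S c 0 β) * (c j ^ 1 * exp (-(c j * β)))
        + (log (gibbsMoment S c 0 β) / gibbsMoment S c 0 β) * (c j ^ 0 * exp (-(c j * β))) := by
    rw [negMulLog, gibbs, log_div (exp_ne_zero _) hZ, log_exp]
    field_simp
    ring
  simp only [hterm, Finset.sum_add_distrib, ← Finset.mul_sum]
  rw [gibbsEntropy, ← gibbsMoment, ← gibbsMoment]
  field_simp

lemma continuous_gibbs (hS : S.Nonempty) (j : ι) : Continuous fun β => gibbs S c β j :=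
  (continuous_exp.comp (continuous_const.mul continuous_id).neg).div
    (continuous_iff_continuousAt.2 fun β => (hasDerivAt_gibbsMoment S c 0 β).continuousAt)
    fun β => (gibbsMoment_zero_pos c hS β).ne'

lemma continuous_gibbsEntropy (hS : S.Nonempty) : Continuous (gibbsEntropy S c) :=
  continuous_iff_continuousAt.2 fun β => (hasDerivAt_gibbsEntropy c hS β).continuousAt

lemma gibbsEntropy_zero : gibbsEntropy S c 0 = log S.card := by
  simp [gibbsEntropy, gibbsMoment]

lemma gibbs_of_forall_eq {j : ι} (h : ∀ l ∈ S, c l = c j) (β : ℝ) :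
    gibbs S c β j = (S.card : ℝ)⁻¹ := by
  have hZ : gibbsMoment S c 0 β = S.card * exp (-(c j * β)) := by
    rw [gibbsMoment, Finset.sum_congr rfl fun l hl => by rw [h l hl, pow_zero, one_mul],
      Finset.sum_const, nsmul_eq_mul]
  rw [gibbs, hZ, div_mul_cancel_right₀ (exp_ne_zero _)]

variable (S) in
lemma gibbs_sub_const (m β : ℝ) (j : ι) : gibbs S (fun l => c l - m) β j = gibbs S c β j := by
  have hshift (l : ι) : exp (-((c l - m) * β)) = exp (-(c l * β)) * exp (m * β) := by
    rw [← exp_add]; ring_nf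
  simp only [gibbs, gibbsMoment, pow_zero, one_mul, hshift, ← Finset.sum_mul,
    mul_div_mul_right _ _ (exp_ne_zero _)]

variable (S) in
def groundStates : Finset ι := S.filter fun k => ∀ l ∈ S, c k ≤ c l

lemma tendsto_gibbs_atTop [DecidableEq ι] {j : ι} (hj : j ∈ S) :
    Tendsto (fun β => gibbs S c β j) atTop
      (𝓝 (if j ∈ groundStates S c then ((groundStates S c).card : ℝ)⁻¹ else 0)) := by
  obtain ⟨a, ha, hmin⟩ := S.exists_min_image c ⟨j, hj⟩
  have hground {l : ι} (hl : l ∈ S) : (∀ k ∈ S, c l ≤ c k) ↔ c l - c a = 0 :=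
    ⟨fun h => sub_eq_zero.2 (le_antisymm (h a ha) (hmin l hl)),
      fun h k hk => (sub_eq_zero.1 h).le.trans (hmin k hk)⟩
  have hlim {l : ι} (hl : l ∈ S) : Tendsto (fun β => exp (-((c l - c a) * β))) atTop
      (𝓝 (if ∀ k ∈ S, c l ≤ c k then 1 else 0)) := by
    simpa only [hground hl] using tendsto_exp_neg_mul_atTop (sub_nonneg.2 (hmin l hl))
  have hZ : Tendsto (fun β => gibbsMoment S (fun l => c l - c a) 0 β) atTop
      (𝓝 (groundStates S c).card) := by
    simpa only [gibbsMoment, groundStates, pow_zero, one_mul, Finset.sum_boole] using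
      tendsto_finsetSum S fun l hl => hlim hl
  have hcard : ((groundStates S c).card : ℝ) ≠ 0 := Nat.cast_ne_zero.2 <|
    Finset.card_ne_zero_of_mem (Finset.mem_filter.2 ⟨ha, hmin⟩)
  have hval : (if j ∈ groundStates S c then ((groundStates S c).card : ℝ)⁻¹ else 0) =
      (if ∀ k ∈ S, c j ≤ c k then 1 else 0) / (groundStates S c).card := by
    simp only [groundStates, Finset.mem_filter, hj, true_and]
    split_ifs <;> simp
  simp_rw [hval, ← gibbs_sub_const S c (c a)]
  exact (hlim hj).div hZ hcard

end Gibbs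

lemma tendsto_inv_two_mul_sq_nhdsGT_zero :
    Tendsto (fun σ : ℝ => (2 * σ ^ 2)⁻¹) (𝓝[>] 0) atTop := by
  refine tendsto_inv_nhdsGT_zero.comp (tendsto_nhdsWithin_iff.2 ⟨?_, ?_⟩)
  · simpa using ((by fun_prop : Continuous fun σ : ℝ => 2 * σ ^ 2).tendsto 0).mono_left
      nhdsWithin_le_nhds
  · filter_upwards [self_mem_nhdsWithin] with σ (hσ : 0 < σ)
    exact mem_Ioi.2 (by positivity)

lemma hasDerivAt_inv_two_mul_sq {σ : ℝ} (hσ : σ ≠ 0) :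
    HasDerivAt (fun σ : ℝ => (2 * σ ^ 2)⁻¹) (-(σ ^ 3)⁻¹) σ := by
  refine (((hasDerivAt_pow 2 σ).const_mul 2).inv (by positivity)).congr_deriv ?_
  field_simp
  ring

namespace TSNEPaper

variable {n : ℕ} {E : Type*}

lemma entropy2_eq_sum_negMulLog (p : Fin n → ℝ) :
    entropy2 p = (∑ j, negMulLog (p j)) / log 2 := by
  simp only [entropy2, negMulLog, logb, neg_mul, Finset.sum_neg_distrib, mul_div_assoc,
    Finset.sum_div, neg_div]

lemma continuous_entropy2 : Continuous (entropy2 : (Fin n → ℝ) → ℝ) := by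
  simp only [funext entropy2_eq_sum_negMulLog]
  fun_prop

section Bandwidth

variable [NormedAddCommGroup E] (X : Fin n → E) (i : Fin n)

def sqDist (j : Fin n) : ℝ := ‖X i - X j‖ ^ 2

lemma nearestSet_eq_groundStates :
    nearestSet X i = groundStates (Finset.univ.erase i) (sqDist X i) := by
  ext j
  simp only [nearestSet, groundStates, sqDist, Finset.mem_filter,
    sq_le_sq₀ (norm_nonneg _) (norm_nonneg _)]

lemma condAffinity_eq_gibbs {σ : ℝ} (hσ : σ ≠ 0) {j : Fin n} (hj : j ≠ i) :
    condAffinity X σ i j = gibbs (Finset.univ.erase i) (sqDist X i) (2 * σ ^ 2)⁻¹ j := by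
  simp only [condAffinity, hj, hσ, if_false, gibbs, gibbsMoment, sqDist, pow_zero, one_mul,
    div_eq_mul_inv, neg_mul]

lemma condAffinity_eq_of_forall_sqDist_eq
    (h : ∀ j ∈ Finset.univ.erase i, ∀ l ∈ Finset.univ.erase i, sqDist X i j = sqDist X i l)
    (σ τ : ℝ) : condAffinity X σ i = condAffinity X τ i := by
  suffices ∀ σ, condAffinity X σ i =
      fun j => if j = i then 0 else ((Finset.univ.erase i).card : ℝ)⁻¹ by
    rw [this, this]
  intro σ
  funext j
  by_cases hj : j = i
  · simp [condAffinity, hj]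
  have hjS : j ∈ Finset.univ.erase i := Finset.mem_erase.2 ⟨hj, Finset.mem_univ j⟩
  by_cases hσ : σ = 0
  · have hground : nearestSet X i = Finset.univ.erase i := by
      ext k
      simp only [nearestSet_eq_groundStates, groundStates, Finset.mem_filter,
        and_iff_left_iff_imp]
      exact fun hk l hl => (h k hk l hl).le
    simp [condAffinity, hj, hσ, hground]
  · rw [condAffinity_eq_gibbs X i hσ hj, gibbs_of_forall_eq _ fun l hl => h l hl j hjS, if_neg hj]

lemma tendsto_condAffinity_nhdsGT_zero (j : Fin n) :
    Tendsto (fun σ => condAffinity X σ i j) (𝓝[>] 0) (𝓝 (condAffinity X 0 i j)) := by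
  by_cases hj : j = i
  · simp only [condAffinity, hj, if_true, tendsto_const_nhds]
  have hlim := (tendsto_gibbs_atTop (sqDist X i)
    (Finset.mem_erase.2 ⟨hj, Finset.mem_univ j⟩)).comp tendsto_inv_two_mul_sq_nhdsGT_zero
  rw [← nearestSet_eq_groundStates] at hlim
  simp only [condAffinity, hj, if_true, if_false]
  refine hlim.congr' ?_
  filter_upwards [self_mem_nhdsWithin] with σ (hσ : 0 < σ)
  simpa [condAffinity, hj, hσ.ne'] using (condAffinity_eq_gibbs X i hσ.ne' hj).symm

lemma continuousOn_condAffinity : ContinuousOn (fun σ => condAffinity X σ i) (Ici 0) := by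
  refine continuousOn_pi.2 fun j σ hσ => ?_
  rcases (mem_Ici.1 hσ).eq_or_lt with rfl | hσ
  · exact continuousWithinAt_Ioi_iff_Ici.1 (tendsto_condAffinity_nhdsGT_zero X i j)
  by_cases hj : j = i
  · simp only [condAffinity, hj, if_true]
    exact continuousWithinAt_const
  have hgibbs :
      ContinuousAt (fun σ => gibbs (Finset.univ.erase i) (sqDist X i) (2 * σ ^ 2)⁻¹ j) σ :=
    (continuous_gibbs _ ⟨j, Finset.mem_erase.2 ⟨hj, Finset.mem_univ j⟩⟩ j).continuousAt.comp
      (hasDerivAt_inv_two_mul_sq hσ.ne').continuousAt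
  refine (hgibbs.congr ?_).continuousWithinAt
  filter_upwards [eventually_ne_nhds hσ.ne'] with τ hτ
  exact (condAffinity_eq_gibbs X i hτ hj).symm

lemma continuousOn_entropy2_condAffinity :
    ContinuousOn (fun σ => entropy2 (condAffinity X σ i)) (Ici 0) :=
  continuous_entropy2.comp_continuousOn (continuousOn_condAffinity X i)

variable {X i}

lemma entropy2_condAffinity (hS : (Finset.univ.erase i).Nonempty) {σ : ℝ} (hσ : σ ≠ 0) :
    entropy2 (condAffinity X σ i) =
      gibbsEntropy (Finset.univ.erase i) (sqDist X i) (2 * σ ^ 2)⁻¹ / log 2 := by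
  rw [entropy2_eq_sum_negMulLog, ← Finset.add_sum_erase _ _ (Finset.mem_univ i),
    ← sum_negMulLog_gibbs _ hS]
  simp only [condAffinity, if_true, negMulLog_zero, zero_add]
  congr 1
  refine Finset.sum_congr rfl fun j hj => ?_
  rw [← condAffinity_eq_gibbs X i hσ (Finset.ne_of_mem_erase hj), condAffinity]

lemma hasDerivAt_entropy2_condAffinity (hS : (Finset.univ.erase i).Nonempty) {σ : ℝ}
    (hσ : σ ≠ 0) :
    HasDerivAt (fun σ => entropy2 (condAffinity X σ i))
      ((2 * σ ^ 2)⁻¹ * gibbsVariance (Finset.univ.erase i) (sqDist X i) (2 * σ ^ 2)⁻¹ /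
        σ ^ 3 / log 2) σ := by
  have hG := ((hasDerivAt_gibbsEntropy (sqDist X i) hS _).comp σ
    (hasDerivAt_inv_two_mul_sq hσ)).div_const (log 2)
  refine (hG.congr_deriv (by ring)).congr_of_eventuallyEq ?_
  filter_upwards [eventually_ne_nhds hσ] with τ hτ
  exact entropy2_condAffinity hS hτ

lemma monotoneOn_entropy2_condAffinity (hS : (Finset.univ.erase i).Nonempty) :
    MonotoneOn (fun σ => entropy2 (condAffinity X σ i)) (Ici 0) := by
  refine monotoneOn_of_deriv_nonneg (convex_Ici 0) (continuousOn_entropy2_condAffinity X i) ?_ ?_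
    <;> rw [interior_Ici]
  · exact fun σ (hσ : 0 < σ) =>
      (hasDerivAt_entropy2_condAffinity hS hσ.ne').differentiableAt.differentiableWithinAt
  · intro σ (hσ : 0 < σ)
    rw [(hasDerivAt_entropy2_condAffinity hS hσ.ne').deriv]
    have := gibbsVariance_nonneg (sqDist X i) hS (2 * σ ^ 2)⁻¹
    have := log_pos one_lt_two
    positivity

lemma strictMonoOn_entropy2_condAffinity {a b : Fin n} (ha : a ∈ Finset.univ.erase i)
    (hb : b ∈ Finset.univ.erase i) (hab : sqDist X i a ≠ sqDist X i b) :
    StrictMonoOn (fun σ => entropy2 (condAffinity X σ i)) (Ici 0) := by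
  refine strictMonoOn_of_deriv_pos (convex_Ici 0) (continuousOn_entropy2_condAffinity X i) ?_
  rw [interior_Ici]
  intro σ (hσ : 0 < σ)
  rw [(hasDerivAt_entropy2_condAffinity ⟨a, ha⟩ hσ.ne').deriv]
  have := gibbsVariance_pos (sqDist X i) ha hb hab (2 * σ ^ 2)⁻¹
  have := log_pos one_lt_two
  positivity

lemma tendsto_entropy2_condAffinity_atTop (hS : (Finset.univ.erase i).Nonempty) :
    Tendsto (fun σ => entropy2 (condAffinity X σ i)) atTop
      (𝓝 (logb 2 (Finset.univ.erase i).card)) := by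
  have hβ : Tendsto (fun σ : ℝ => (2 * σ ^ 2)⁻¹) atTop (𝓝 0) :=
    ((tendsto_pow_atTop two_ne_zero).const_mul_atTop two_pos).inv_tendsto_atTop
  have hG := (((continuous_gibbsEntropy (sqDist X i) hS).tendsto 0).comp hβ).div_const (log 2)
  rw [gibbsEntropy_zero, log_div_log] at hG
  refine hG.congr' ?_
  filter_upwards [eventually_gt_atTop 0] with σ hσ
  exact (entropy2_condAffinity hS hσ.ne').symm

end Bandwidth

section Calibration

variable [NormedAddCommGroup E] {X : Fin n → E} {i : Fin n} {ρ σ : ℝ}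

lemma condAffinity_sigmaStar_eq (h : IsCalibrated X ρ i σ) :
    condAffinity X (sigmaStar X ρ i) i = condAffinity X σ i := by
  have hstar : IsCalibrated X ρ i (sigmaStar X ρ i) := Classical.epsilon_spec ⟨σ, h⟩
  by_cases hc : ∀ j ∈ Finset.univ.erase i, ∀ l ∈ Finset.univ.erase i,
      sqDist X i j = sqDist X i l
  · exact condAffinity_eq_of_forall_sqDist_eq X i hc _ _
  push Not at hc
  obtain ⟨a, ha, b, hb, hab⟩ := hc
  rw [(strictMonoOn_entropy2_condAffinity ha hb hab).eq_of_isMinOn_abs_sub hstar.1 h.1 hstar.2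
    h.2]

variable (X i)

lemma exists_isCalibrated (hρ₀ : 0 < ρ) (hρ : ρ < n - 1) : ∃ σ, IsCalibrated X ρ i σ := by
  have hn : 0 < n := by exact_mod_cast (show (0 : ℝ) < n by linarith)
  have hcard : ((Finset.univ.erase i).card : ℝ) = n - 1 := by
    rw [Finset.card_erase_of_mem (Finset.mem_univ i), Finset.card_univ, Fintype.card_fin,
      Nat.cast_pred hn]
  have hS : (Finset.univ.erase i).Nonempty := by
    rw [← Finset.card_pos, ← Nat.cast_pos (α := ℝ), hcard]
    linarith
  have hlim := tendsto_entropy2_condAffinity_atTop (X := X) hS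
  rw [hcard] at hlim
  obtain ⟨b, hb, hb₀⟩ := ((hlim.eventually_const_lt (logb_lt_logb one_lt_two hρ₀ hρ)).and
    (eventually_ge_atTop 0)).exists
  exact (monotoneOn_entropy2_condAffinity hS).exists_isMinOn_abs_sub
    (continuousOn_entropy2_condAffinity X i) hb₀ hb.le

end Calibration

section Scaling

variable [NormedAddCommGroup E] [NormedSpace ℝ E] (X : Fin n → E) (i : Fin n) {C : ℝ}

lemma nearestSet_smul (hC : 0 < C) : nearestSet (fun l => C • X l) i = nearestSet X i := by
  simp only [nearestSet, ← smul_sub, norm_smul, norm_of_nonneg hC.le,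
    mul_le_mul_iff_right₀ hC]

lemma condAffinity_smul (hC : 0 < C) (σ : ℝ) :
    condAffinity (fun l => C • X l) (C * σ) i = condAffinity X σ i := by
  have harg (j : Fin n) :
      -‖C • X i - C • X j‖ ^ 2 / (2 * (C * σ) ^ 2) = -‖X i - X j‖ ^ 2 / (2 * σ ^ 2) := by
    rw [← smul_sub, norm_smul, norm_of_nonneg hC.le]
    field_simp
  funext j
  simp only [condAffinity, harg, mul_eq_zero, hC.ne', false_or, nearestSet_smul X i hC]

lemma isCalibrated_smul_iff (hC : 0 < C) {ρ σ : ℝ} :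
    IsCalibrated (fun l => C • X l) ρ i (C * σ) ↔ IsCalibrated X ρ i σ := by
  have hscale (τ : ℝ) : condAffinity (fun l => C • X l) τ i = condAffinity X (τ / C) i := by
    rw [← condAffinity_smul X i hC, mul_div_cancel₀ _ hC.ne']
  simp only [IsCalibrated, hscale, mul_div_cancel_left₀ _ hC.ne']
  refine and_congr (mul_nonneg_iff_of_pos_left hC) ⟨fun h τ hτ => ?_, fun h τ hτ => ?_⟩
  · simpa [mul_div_cancel_left₀ _ hC.ne'] using h (C * τ) (by positivity)
  · exact h (τ / C) (by positivity)

lemma condAffinity_sigmaStar_smul {ρ : ℝ} (hρ₀ : 0 < ρ) (hρ : ρ < n - 1) (hC : 0 < C) :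
    condAffinity (fun l => C • X l) (sigmaStar (fun l => C • X l) ρ i) i =
      condAffinity X (sigmaStar X ρ i) i := by
  obtain ⟨σ, hσ⟩ := exists_isCalibrated X i hρ₀ hρ
  rw [condAffinity_sigmaStar_eq ((isCalibrated_smul_iff X i hC).2 hσ),
    condAffinity_sigmaStar_eq hσ, condAffinity_smul X i hC]

lemma inAffinity_smul {ρ : ℝ} (hρ₀ : 0 < ρ) (hρ : ρ < n - 1) (hC : 0 < C) :
    inAffinity (fun l => C • X l) ρ = inAffinity X ρ := by
  funext i j
  simp only [inAffinity, condAffinity_sigmaStar_smul X _ hρ₀ hρ hC]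

lemma tsneLoss_smul {d : ℕ} {ρ : ℝ} (hρ₀ : 0 < ρ) (hρ : ρ < n - 1) (hC : 0 < C) :
    (tsneLoss (fun l => C • X l) ρ : (Fin n → EuclideanSpace ℝ (Fin d)) → ℝ) = tsneLoss X ρ := by
  funext Y
  simp only [tsneLoss, inAffinity_smul X hρ₀ hρ hC]

end Scaling

theorem tSNE_multiplicative_invariance_general (n d : ℕ)
    (X : Fin n → EuclideanSpace ℝ (Fin (n - 1)))
    (ρ C : ℝ) (hρ : 1 < ρ) (hρ' : ρ < (n : ℝ) - 1) (hC : 0 < C) :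
    TSNE d ρ X = TSNE d ρ (fun i => C • X i) := by
  rw [TSNE, TSNE, tsneLoss_smul X (zero_lt_one.trans hρ) hρ' hC]

/-- Lemma `tSNE_multiplicative_invariance`: the set of stationary t-SNE
outputs is invariant under multiplicative scaling of the input. -/
theorem tSNE_multiplicative_invariance (n d : ℕ) (hn : 2 < n) (hd : 1 ≤ d)
    (X : Fin n → EuclideanSpace ℝ (Fin (n - 1)))
    (ρ C : ℝ) (hρ : 1 < ρ) (hρ' : ρ < (n : ℝ) - 1) (hC : 0 < C) :
    TSNE d ρ X = TSNE d ρ (fun i => C • X i) :=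
  tSNE_multiplicative_invariance_general n d X ρ C hρ hρ' hC

end TSNEPaper
end
end
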